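/- arXiv:1209.3251 — 6 statements merged into one kernel-verified Lean document; each statement's English description precedes it below -/
import Mathlib

section
/- Let ⪯ be a left-ordering on a group G and let H be a ⪯-convex subgroup. Then there is a continuous injective map LO(H) → LO(G) whose image contains ⪯. Moreover, if in addition H is normal in G, then there is a continuous injective map LO(H) × LO(G/H) → LO(G) whose image contains ⪯. -/
structure LeftOrder (G : Type*) [Group G] where
  lt : G → G → Prop
  irrefl : ∀ a, ¬ lt a a
  trans : ∀ a b c, lt a b → lt b c → lt a c
  total : ∀ a b, lt a b ∨ a = b ∨ lt b a
  mul_left : ∀ a b c, lt a b → lt (c * a) (c * b)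

namespace LeftOrder

variable {G : Type*} [Group G]

def le (o : LeftOrder G) (a b : G) : Prop := o.lt a b ∨ a = b

noncomputable def cone (o : LeftOrder G) : G → Bool :=
  fun g => @decide (o.lt 1 g) (Classical.propDecidable _)

noncomputable instance : TopologicalSpace (LeftOrder G) :=
  TopologicalSpace.induced cone inferInstance

def restrict (o : LeftOrder G) (H : Subgroup G) : LeftOrder H where
  lt a b := o.lt a b
  irrefl a := o.irrefl a
  trans a b c hab hbc := o.trans _ _ _ hab hbc
  total a b := by
    rcases o.total (a : G) b with h | h | h
    · exact Or.inl h
    · exact Or.inr (Or.inl (Subtype.coe_injective h))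
    · exact Or.inr (Or.inr h)
  mul_left a b c h := by
    simpa using o.mul_left (a : G) b c h

def conj (o : LeftOrder G) (g : G) : LeftOrder G where
  lt a b := o.lt (g * a * g⁻¹) (g * b * g⁻¹)
  irrefl a := o.irrefl _
  trans a b c hab hbc := o.trans _ _ _ hab hbc
  total a b := by
    rcases o.total (g * a * g⁻¹) (g * b * g⁻¹) with h | h | h
    · exact Or.inl h
    · exact Or.inr (Or.inl (mul_left_cancel (mul_right_cancel h)))
    · exact Or.inr (Or.inr h)
  mul_left a b c h := by
    have key : ∀ x : G, g * (c * x) * g⁻¹ = (g * c * g⁻¹) * (g * x * g⁻¹) := by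
      intro x; group
    show o.lt (g * (c * a) * g⁻¹) (g * (c * b) * g⁻¹)
    rw [key a, key b]
    exact o.mul_left _ _ _ h

def IsConvex (o : LeftOrder G) (H : Subgroup G) : Prop :=
  ∀ g h₁ h₂ : G, h₁ ∈ H → h₂ ∈ H → o.le h₁ g → o.le g h₂ → g ∈ H

def IsConradian (o : LeftOrder G) : Prop :=
  ∀ f g : G, o.lt 1 f → o.lt 1 g → o.lt g (f * (g * g))

end LeftOrder


/-!
A left order in which `H` is convex is the lexicographic combination of its restriction to `H`
and its positive cone off `H`, a cone that is invariant under multiplication by `H`. Gluing any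
left order of `H` to this fixed cone gives the first map. When `H` is normal, the `H`-invariant
cones off `H` are exactly the pull-backs of positive cones of `G ⧸ H`, and gluing a pair of orders
gives the second map. Whether `1 < g` in a glued order is decided by a single comparison in one of
the inputs, so the maps are continuous; restricting to `H` and passing to `G ⧸ H` recover the
inputs, so they are injective.
-/

namespace LeftOrder

variable {G : Type*} [Group G]

theorem lt_iff_one_lt_inv_mul (o : LeftOrder G) (a b : G) : o.lt a b ↔ o.lt 1 (a⁻¹ * b) :=
  ⟨fun h => by simpa using o.mul_left _ _ a⁻¹ h, fun h => by simpa using o.mul_left _ _ a h⟩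

theorem ext_of_one_lt {o₁ o₂ : LeftOrder G} (h : ∀ g, o₁.lt 1 g ↔ o₂.lt 1 g) : o₁ = o₂ := by
  have hlt : o₁.lt = o₂.lt := by
    ext a b
    rw [lt_iff_one_lt_inv_mul o₁, lt_iff_one_lt_inv_mul o₂]
    exact h _
  cases o₁; cases o₂; congr

theorem one_lt_inv_of_lt_one {o : LeftOrder G} {g : G} (h : o.lt g 1) : o.lt 1 g⁻¹ := by
  simpa using o.mul_left _ _ g⁻¹ h

theorem one_lt_mul {o : LeftOrder G} {a b : G} (ha : o.lt 1 a) (hb : o.lt 1 b) :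
    o.lt 1 (a * b) :=
  o.trans _ _ _ ha (by simpa using o.mul_left _ _ a hb)

def ofCone (P : G → Prop) (not_one : ¬ P 1) (mul : ∀ a b, P a → P b → P (a * b))
    (inv_or : ∀ g, g ≠ 1 → P g ∨ P g⁻¹) : LeftOrder G where
  lt a b := P (a⁻¹ * b)
  irrefl a := by simpa using not_one
  trans a b c hab hbc := by simpa [mul_assoc] using mul _ _ hab hbc
  total a b := by
    by_cases hab : a⁻¹ * b = 1
    · exact Or.inr (Or.inl (inv_mul_eq_one.mp hab))
    · exact (inv_or _ hab).imp_right fun h => Or.inr (by simpa using h)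
  mul_left a b c h := by simpa [mul_assoc] using h

theorem one_lt_ofCone {P : G → Prop} {not_one mul inv_or} {g : G} :
    (ofCone P not_one mul inv_or).lt 1 g ↔ P g := by
  simp [ofCone]

theorem continuous_iff_isClopen_setOfPred_one_lt {X : Type*} [TopologicalSpace X]
    {Φ : X → LeftOrder G} : Continuous Φ ↔ ∀ g, IsClopen {x | (Φ x).lt 1 g} := by
  rw [continuous_induced_rng, continuous_pi_iff]
  refine forall_congr' fun g => ?_
  rw [continuous_bool_rng true]
  simp [Set.preimage, cone]

theorem isClopen_setOfPred_one_lt (g : G) : IsClopen {o : LeftOrder G | o.lt 1 g} :=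
  continuous_iff_isClopen_setOfPred_one_lt.mp continuous_id g

variable {H : Subgroup G}

/-- The positive cone, off `H`, of a left order of `G` in which `H` is convex. -/
structure IsRelativeCone (H : Subgroup G) (Q : G → Prop) : Prop where
  not_mem : ∀ g, Q g → g ∉ H
  inv_or : ∀ g, g ∉ H → Q g ∨ Q g⁻¹
  mul : ∀ a b, Q a → Q b → Q (a * b)
  mem_mul : ∀ h g, h ∈ H → Q g → Q (h * g)

namespace IsRelativeCone

variable {Q : G → Prop}

theorem mul_mem (hQ : IsRelativeCone H Q) {g h : G} (hg : Q g) (hh : h ∈ H) : Q (g * h) := by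
  have hgh : g * h ∉ H := fun hm => hQ.not_mem g hg (by simpa using H.mul_mem hm (H.inv_mem hh))
  refine (hQ.inv_or _ hgh).resolve_right fun hinv => ?_
  have hginv : Q g⁻¹ := by simpa using hQ.mem_mul h _ hh hinv
  exact hQ.not_mem 1 (by simpa using hQ.mul _ _ hg hginv) H.one_mem

theorem iff_of_inv_mul_mem (hQ : IsRelativeCone H Q) {a b : G} (hab : a⁻¹ * b ∈ H) :
    Q a ↔ Q b := by
  have hb : b = a * (a⁻¹ * b) := by group
  have ha : a = b * (a⁻¹ * b)⁻¹ := by group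
  exact ⟨fun h => hb ▸ hQ.mul_mem h hab, fun h => ha ▸ hQ.mul_mem h (H.inv_mem hab)⟩

variable (hQ : IsRelativeCone H Q)

def lex (o' : LeftOrder H) : LeftOrder G :=
  ofCone (fun g => (∃ hg : g ∈ H, o'.lt 1 ⟨g, hg⟩) ∨ Q g)
    (by rintro (⟨_, h⟩ | h); exacts [o'.irrefl 1 h, hQ.not_mem 1 h H.one_mem])
    (by
      rintro a b (⟨ha, hpa⟩ | hqa) (⟨hb, hpb⟩ | hqb)
      · exact Or.inl ⟨H.mul_mem ha hb, one_lt_mul (b := ⟨b, hb⟩) hpa hpb⟩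
      · exact Or.inr (hQ.mem_mul a b ha hqb)
      · exact Or.inr (hQ.mul_mem hqa hb)
      · exact Or.inr (hQ.mul a b hqa hqb))
    (by
      intro g hg1
      by_cases hg : g ∈ H
      · have hne : (⟨g, hg⟩ : H) ≠ 1 := fun h => hg1 (congrArg Subtype.val h)
        rcases o'.total 1 ⟨g, hg⟩ with h | h | h
        · exact Or.inl (Or.inl ⟨hg, h⟩)
        · exact absurd h.symm hne
        · exact Or.inr (Or.inl ⟨H.inv_mem hg, one_lt_inv_of_lt_one h⟩)
      · exact (hQ.inv_or g hg).imp Or.inr Or.inr)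

theorem one_lt_lex_of_mem (o' : LeftOrder H) {g : G} (hg : g ∈ H) :
    (hQ.lex o').lt 1 g ↔ o'.lt 1 ⟨g, hg⟩ := by
  rw [lex, one_lt_ofCone]
  exact ⟨fun h => h.elim (fun ⟨_, h⟩ => h) fun h => absurd hg (hQ.not_mem g h),
    fun h => Or.inl ⟨hg, h⟩⟩

theorem one_lt_lex_of_not_mem (o' : LeftOrder H) {g : G} (hg : g ∉ H) :
    (hQ.lex o').lt 1 g ↔ Q g := by
  rw [lex, one_lt_ofCone]
  exact ⟨fun h => h.resolve_left fun ⟨hm, _⟩ => hg hm, Or.inr⟩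

theorem restrict_lex (o' : LeftOrder H) : (hQ.lex o').restrict H = o' :=
  ext_of_one_lt fun g => hQ.one_lt_lex_of_mem o' g.2

theorem lex_restrict {o : LeftOrder G} (h : ∀ g, g ∉ H → (Q g ↔ o.lt 1 g)) :
    hQ.lex (o.restrict H) = o := by
  refine ext_of_one_lt fun g => ?_
  by_cases hg : g ∈ H
  · exact hQ.one_lt_lex_of_mem _ hg
  · exact (hQ.one_lt_lex_of_not_mem _ hg).trans (h g hg)

end IsRelativeCone

theorem IsRelativeCone.continuous_lex {X : Type*} [TopologicalSpace X] {Q : X → G → Prop}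
    (hQ : ∀ x, IsRelativeCone H (Q x)) {f : X → LeftOrder H} (hf : Continuous f)
    (hQc : ∀ g, g ∉ H → IsClopen {x | Q x g}) : Continuous fun x => (hQ x).lex (f x) := by
  refine continuous_iff_isClopen_setOfPred_one_lt.mpr fun g => ?_
  by_cases hg : g ∈ H
  · simp only [(hQ _).one_lt_lex_of_mem _ hg]
    exact (isClopen_setOfPred_one_lt (⟨g, hg⟩ : H)).preimage hf
  · simp only [(hQ _).one_lt_lex_of_not_mem _ hg]
    exact hQc g hg

theorem IsConvex.isRelativeCone {o : LeftOrder G} (hconv : o.IsConvex H) :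
    IsRelativeCone H fun g => g ∉ H ∧ o.lt 1 g where
  not_mem _ h := h.1
  inv_or g hg := by
    rcases o.total 1 g with h | rfl | h
    · exact Or.inl ⟨hg, h⟩
    · exact absurd H.one_mem hg
    · exact Or.inr ⟨fun hm => hg (by simpa using H.inv_mem hm), one_lt_inv_of_lt_one h⟩
  mul a b ha hb := by
    have hab : o.lt a (a * b) := by simpa using o.mul_left _ _ a hb.2
    refine ⟨fun hm => ha.1 ?_, o.trans _ _ _ ha.2 hab⟩
    exact hconv a 1 (a * b) H.one_mem hm (Or.inl ha.2) (Or.inl hab)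
  mem_mul h g hh hg := by
    have hhg : h * g ∉ H := fun hm => hg.1 (by simpa using H.mul_mem (H.inv_mem hh) hm)
    refine ⟨hhg, ?_⟩
    rcases o.total 1 (h * g) with hlt | heq | hlt
    · exact hlt
    · exact absurd (heq ▸ H.one_mem) hhg
    · -- `1 < g < h⁻¹` would put `g` in the convex subgroup `H`
      have hgh : o.lt g h⁻¹ := by simpa using o.mul_left _ _ h⁻¹ hlt
      exact absurd (hconv g 1 h⁻¹ H.one_mem (H.inv_mem hh) (Or.inl hg.2) (Or.inl hgh)) hg.1

theorem isRelativeCone_one_lt_mk [H.Normal] (o₂ : LeftOrder (G ⧸ H)) :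
    IsRelativeCone H fun g => o₂.lt 1 (g : G ⧸ H) where
  not_mem g h hg := o₂.irrefl 1 (by rwa [(QuotientGroup.eq_one_iff g).mpr hg] at h)
  inv_or g hg := by
    rcases o₂.total 1 (g : G ⧸ H) with h | h | h
    · exact Or.inl h
    · exact absurd ((QuotientGroup.eq_one_iff g).mp h.symm) hg
    · exact Or.inr (by simpa using one_lt_inv_of_lt_one h)
  mul _ _ ha hb := by simpa using one_lt_mul ha hb
  mem_mul h _ hh hg := by rwa [QuotientGroup.mk_mul, (QuotientGroup.eq_one_iff h).mpr hh, one_mul]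

namespace IsRelativeCone

variable [H.Normal] {Q : G → Prop}

def quotient (hQ : IsRelativeCone H Q) : LeftOrder (G ⧸ H) :=
  ofCone
    (Quotient.lift Q fun _ _ hab =>
      propext (hQ.iff_of_inv_mul_mem (QuotientGroup.leftRel_apply.mp hab)))
    (hQ.not_mem 1 · H.one_mem)
    (by
      rintro ⟨a⟩ ⟨b⟩ ha hb
      exact hQ.mul a b ha hb)
    (by
      rintro ⟨g⟩ hg
      exact hQ.inv_or g fun hm => hg ((QuotientGroup.eq_one_iff g).mpr hm))

theorem one_lt_quotient_mk (hQ : IsRelativeCone H Q) (g : G) :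
    hQ.quotient.lt 1 (g : G ⧸ H) ↔ Q g :=
  one_lt_ofCone

end IsRelativeCone

theorem injective_lex_one_lt_mk [H.Normal] :
    Function.Injective fun p : LeftOrder H × LeftOrder (G ⧸ H) =>
      (isRelativeCone_one_lt_mk p.2).lex p.1 := by
  rintro ⟨o₁, q₁⟩ ⟨o₂, q₂⟩ h
  simp only at h
  refine Prod.ext ?_ (ext_of_one_lt fun x => ?_)
  · simpa only [IsRelativeCone.restrict_lex] using congrArg (restrict · H) h
  obtain ⟨g, rfl⟩ := QuotientGroup.mk_surjective x
  by_cases hg : g ∈ H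
  · rw [(QuotientGroup.eq_one_iff g).mpr hg]
    exact iff_of_false (q₁.irrefl 1) (q₂.irrefl 1)
  · rw [← (isRelativeCone_one_lt_mk q₁).one_lt_lex_of_not_mem o₁ hg, h,
      (isRelativeCone_one_lt_mk q₂).one_lt_lex_of_not_mem o₂ hg]

end LeftOrder

/-- If `H` is a convex subgroup of `(G, ⪯)` then there is a
continuous injection `LO(H) → LO(G)` with `⪯` in its image; if moreover `H` is
normal there is a continuous injection `LO(H) × LO(G/H) → LO(G)` with `⪯` in its
image. -/
theorem exists_continuous_injection_of_convex
    {G : Type*} [Group G] (o : LeftOrder G) (H : Subgroup G)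
    (hconv : o.IsConvex H) :
    (∃ Φ : LeftOrder H → LeftOrder G,
        Continuous Φ ∧ Function.Injective Φ ∧ o ∈ Set.range Φ) ∧
    (∀ hn : H.Normal,
        haveI := hn
        ∃ Ψ : LeftOrder H × LeftOrder (G ⧸ H) → LeftOrder G,
          Continuous Ψ ∧ Function.Injective Ψ ∧ o ∈ Set.range Ψ) := by
  have hQ := hconv.isRelativeCone
  have hQ_iff : ∀ g, g ∉ H → ((g ∉ H ∧ o.lt 1 g) ↔ o.lt 1 g) := fun _ => and_iff_right
  refine ⟨⟨hQ.lex, ?_, ?_, o.restrict H, hQ.lex_restrict hQ_iff⟩, fun hn => ?_⟩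
  · exact LeftOrder.IsRelativeCone.continuous_lex (fun _ => hQ) continuous_id
      fun _ _ => ⟨isClosed_const, isOpen_const⟩
  · exact Function.LeftInverse.injective (g := (LeftOrder.restrict · H)) hQ.restrict_lex
  refine ⟨fun p => (LeftOrder.isRelativeCone_one_lt_mk p.2).lex p.1, ?_,
    LeftOrder.injective_lex_one_lt_mk, (o.restrict H, hQ.quotient), ?_⟩
  · exact LeftOrder.IsRelativeCone.continuous_lex _ continuous_fst
      fun g _ => (LeftOrder.isClopen_setOfPred_one_lt (g : G ⧸ H)).preimage continuous_snd
  · exact (LeftOrder.isRelativeCone_one_lt_mk _).lex_restrict fun g hg =>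
      (hQ.one_lt_quotient_mk g).trans (hQ_iff g hg)
end

section
/- Let ⪯ be a left-ordering on a group G and let H be a normal ⪯-convex subgroup. If the restriction of ⪯ to H is Conradian and the quotient ordering induced by ⪯ on G/H is Conradian, then ⪯ is Conradian. -/
/-!
Split according to whether `f` and `g` both lie in `H`. If they do, the Conradian property of
`H` applies. Otherwise their cosets satisfy `1 ⪯* f̄`, `1 ⪯* ḡ` and are not both trivial, so
`ḡ ≺* f̄ ḡ²` in `G/H` (by the Conradian property of `⪯*` when both are nontrivial, and by
left-invariance otherwise), and a strict inequality between cosets lifts to their representatives.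
-/

namespace LeftOrder

variable {G : Type*} [Group G]

theorem le_of_not_lt (o : LeftOrder G) {a b : G} (h : ¬ o.lt b a) : o.le a b := by
  rcases o.total a b with hab | hab | hba
  · exact Or.inl hab
  · exact Or.inr hab
  · exact absurd hba h

theorem not_lt_of_le (o : LeftOrder G) {a b : G} (h : o.le a b) : ¬ o.lt b a := by
  rcases h with hab | rfl
  · exact fun hba => o.irrefl a (o.trans _ _ _ hab hba)
  · exact o.irrefl a

theorem lt_mul_self (o : LeftOrder G) {g : G} (hg : o.lt 1 g) : o.lt g (g * g) := by
  simpa using o.mul_left _ _ g hg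

theorem IsConradian.lt_mul_mul_self {o : LeftOrder G} (hc : o.IsConradian) {f g : G}
    (hf : o.le 1 f) (hg : o.le 1 g) (hfg : f ≠ 1 ∨ g ≠ 1) : o.lt g (f * (g * g)) := by
  rcases hf with hf | rfl <;> rcases hg with hg | rfl
  · exact hc f g hf hg
  · simpa using hf
  · simpa using o.lt_mul_self hg
  · simp at hfg

def IsQuotientOrder (o : LeftOrder G) (H : Subgroup G) [H.Normal] (o' : LeftOrder (G ⧸ H)) :
    Prop :=
  ∀ a b : G, o'.lt (a : G ⧸ H) (b : G ⧸ H) ↔ ∀ h₁ ∈ H, ∀ h₂ ∈ H, o.lt (a * h₁) (b * h₂)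

namespace IsQuotientOrder

variable {o : LeftOrder G} {H : Subgroup G} [H.Normal] {o' : LeftOrder (G ⧸ H)}

theorem lt_of_mk_lt (hq : o.IsQuotientOrder H o') {a b : G}
    (h : o'.lt (a : G ⧸ H) (b : G ⧸ H)) : o.lt a b := by
  simpa using (hq a b).1 h 1 H.one_mem 1 H.one_mem

theorem mk_le_mk (hq : o.IsQuotientOrder H o') {a b : G} (h : o.le a b) :
    o'.le (a : G ⧸ H) (b : G ⧸ H) :=
  o'.le_of_not_lt fun hba => o.not_lt_of_le h (hq.lt_of_mk_lt hba)

end IsQuotientOrder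

end LeftOrder

theorem isConradian_of_convex_normal_extension_general
    {G : Type*} [Group G] (o : LeftOrder G) (H : Subgroup G) [H.Normal]
    (o' : LeftOrder (G ⧸ H))
    (hquot : ∀ a b : G,
      o'.lt ((a : G ⧸ H)) ((b : G ⧸ H)) ↔
        ∀ h₁ ∈ H, ∀ h₂ ∈ H, o.lt (a * h₁) (b * h₂))
    (hH : (o.restrict H).IsConradian)
    (hGH : o'.IsConradian) :
    o.IsConradian := by
  have hq : o.IsQuotientOrder H o' := hquot
  intro f g hf hg
  by_cases hfgH : f ∈ H ∧ g ∈ H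
  · exact hH ⟨f, hfgH.1⟩ ⟨g, hfgH.2⟩ hf hg
  have hf' : o'.le 1 (f : G ⧸ H) := by simpa using hq.mk_le_mk (Or.inl hf)
  have hg' : o'.le 1 (g : G ⧸ H) := by simpa using hq.mk_le_mk (Or.inl hg)
  have hnontriv : (f : G ⧸ H) ≠ 1 ∨ (g : G ⧸ H) ≠ 1 := by
    simpa only [ne_eq, QuotientGroup.eq_one_iff, not_and_or] using hfgH
  exact hq.lt_of_mk_lt (by simpa using hGH.lt_mul_mul_self hf' hg' hnontriv)

/-- If `H` is a normal convex subgroup of `(G, ⪯)`, the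
restriction of `⪯` to `H` is Conradian, and the quotient ordering induced on
`G/H` is Conradian, then `⪯` is Conradian.  The quotient ordering `⪯*` is
characterized by `g₁H ≺* g₂H ↔ ∀ h₁ h₂ ∈ H, g₁h₁ ≺ g₂h₂`. -/
theorem isConradian_of_convex_normal_extension
    {G : Type*} [Group G] (o : LeftOrder G) (H : Subgroup G) [H.Normal]
    (hconv : o.IsConvex H)
    (o' : LeftOrder (G ⧸ H))
    (hquot : ∀ a b : G,
      o'.lt ((a : G ⧸ H)) ((b : G ⧸ H)) ↔
        ∀ h₁ ∈ H, ∀ h₂ ∈ H, o.lt (a * h₁) (b * h₂))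
    (hH : (o.restrict H).IsConradian)
    (hGH : o'.IsConradian) :
    o.IsConradian :=
  isConradian_of_convex_normal_extension_general o H o' hquot hH hGH
end

section
/- Suppose a left-ordered group (G,⪯) has infinitely many ⪯-convex subgroups. Then ⪯ is not an isolated point of LO(G). -/
/-! If `{⪯}` were open, `⪯` would be determined by the signs of the elements of a finite set
`S`. As `S` has only finitely many subsets, two distinct convex subgroups `K < L` meet `S` in
the same set. Reversing `⪯` inside the left cosets of `L`, and then again inside those of `K`,
gives a left-ordering that differs from `⪯` exactly on `L \ K`, hence agrees with `⪯` on `S`. -/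

namespace LeftOrder

variable {G : Type*} [Group G]

section Basic

variable (o : LeftOrder G)

theorem lt_asymm {a b : G} (h : o.lt a b) : ¬ o.lt b a :=
  fun h' => o.irrefl a (o.trans _ _ _ h h')

theorem eq_one_of_one_lt_iff_lt_one {g : G} (h : o.lt 1 g ↔ o.lt g 1) : g = 1 := by
  rcases o.total 1 g with hg | hg | hg
  · exact absurd (h.mp hg) (o.lt_asymm hg)
  · exact hg.symm
  · exact absurd (h.mpr hg) (o.lt_asymm hg)

theorem mul_lt_mul_left_iff (c a b : G) : o.lt (c * a) (c * b) ↔ o.lt a b :=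
  ⟨fun h => by simpa using o.mul_left _ _ c⁻¹ h, o.mul_left a b c⟩

theorem one_lt_inv_mul_iff (a b : G) : o.lt 1 (a⁻¹ * b) ↔ o.lt a b := by
  rw [← o.mul_lt_mul_left_iff a]; simp

theorem inv_mul_lt_one_iff (a b : G) : o.lt (a⁻¹ * b) 1 ↔ o.lt b a := by
  rw [← o.mul_lt_mul_left_iff a]; simp

theorem one_lt_inv_iff (a : G) : o.lt 1 a⁻¹ ↔ o.lt a 1 := by
  simpa using o.one_lt_inv_mul_iff a 1

theorem inv_lt_one_iff (a : G) : o.lt a⁻¹ 1 ↔ o.lt 1 a := by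
  simpa using (o.one_lt_inv_iff a⁻¹).symm

theorem exists_one_lt_mem_notMem {H K : Subgroup G} {a : G} (haH : a ∈ H) (haK : a ∉ K) :
    ∃ b, o.lt 1 b ∧ b ∈ H ∧ b ∉ K := by
  rcases o.total 1 a with h | rfl | h
  · exact ⟨a, h, haH, haK⟩
  · exact absurd K.one_mem haK
  · exact ⟨a⁻¹, (o.one_lt_inv_iff a).mpr h, inv_mem haH, by simpa using haK⟩

end Basic

section Convex

variable {o : LeftOrder G} {C : Subgroup G}

theorem IsConvex.lt_of_one_lt_of_notMem (hC : o.IsConvex C) {c g : G} (hc : c ∈ C)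
    (hg : o.lt 1 g) (hgC : g ∉ C) : o.lt c g := by
  rcases o.total c g with h | rfl | h
  · exact h
  · exact absurd hc hgC
  · exact absurd (hC g 1 c C.one_mem hc (Or.inl hg) (Or.inl h)) hgC

theorem IsConvex.lt_of_lt_one_of_notMem (hC : o.IsConvex C) {c g : G} (hc : c ∈ C)
    (hg : o.lt g 1) (hgC : g ∉ C) : o.lt g c := by
  rcases o.total g c with h | rfl | h
  · exact h
  · exact absurd hc hgC
  · exact absurd (hC g c 1 hc C.one_mem (Or.inl h) (Or.inl hg)) hgC

theorem IsConvex.le_total {H : Subgroup G} (hC : o.IsConvex C) (hH : o.IsConvex H) :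
    C ≤ H ∨ H ≤ C := by
  by_contra! hne
  obtain ⟨a₀, ha₀C, ha₀H⟩ := SetLike.not_le_iff_exists.mp hne.1
  obtain ⟨b₀, hb₀H, hb₀C⟩ := SetLike.not_le_iff_exists.mp hne.2
  obtain ⟨a, ha, haC, haH⟩ := o.exists_one_lt_mem_notMem ha₀C ha₀H
  obtain ⟨b, hb, hbH, hbC⟩ := o.exists_one_lt_mem_notMem hb₀H hb₀C
  exact o.lt_asymm (hH.lt_of_one_lt_of_notMem hbH ha haH)
    (hC.lt_of_one_lt_of_notMem haC hb hbC)

end Convex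

def ofPositiveCone (P : G → Prop) (not_one : ¬ P 1) (mul : ∀ x y, P x → P y → P (x * y))
    (total : ∀ x, P x ∨ x = 1 ∨ P x⁻¹) : LeftOrder G where
  lt a b := P (a⁻¹ * b)
  irrefl a := by simpa using not_one
  trans a b c hab hbc := by simpa [mul_assoc] using mul _ _ hab hbc
  total a b := by
    rcases total (a⁻¹ * b) with h | h | h
    · exact Or.inl h
    · exact Or.inr (Or.inl (inv_mul_eq_one.mp h))
    · exact Or.inr (Or.inr (by simpa using h))
  mul_left a b c h := by simpa [mul_assoc] using h

section Flip

variable (o : LeftOrder G) (C : Subgroup G)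

/-- The positive cone of the ordering obtained from `o` by reversing it inside every left
coset of `C`. -/
def flipCone (x : G) : Prop :=
  (x ∈ C ∧ o.lt x 1) ∨ (x ∉ C ∧ o.lt 1 x)

variable {o C}

theorem IsConvex.flipCone_mul (hC : o.IsConvex C) {x y : G} (hx : o.flipCone C x)
    (hy : o.flipCone C y) : o.flipCone C (x * y) := by
  rcases hx with ⟨hxC, hx⟩ | ⟨hxC, hx⟩ <;> rcases hy with ⟨hyC, hy⟩ | ⟨hyC, hy⟩
  · exact Or.inl ⟨mul_mem hxC hyC, o.trans _ _ _ (by simpa using o.mul_left _ _ x hy) hx⟩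
  · refine Or.inr ⟨fun h => hyC (by simpa using mul_mem (inv_mem hxC) h), ?_⟩
    rw [← o.mul_lt_mul_left_iff x⁻¹]
    simpa using hC.lt_of_one_lt_of_notMem (inv_mem hxC) hy hyC
  · refine Or.inr ⟨fun h => hxC (by simpa using mul_mem h (inv_mem hyC)), ?_⟩
    rw [← o.mul_lt_mul_left_iff x⁻¹]
    simpa using hC.lt_of_lt_one_of_notMem hyC ((o.inv_lt_one_iff x).mpr hx) (by simpa using hxC)
  · have hxy : o.lt x (x * y) := by simpa using o.mul_left _ _ x hy
    refine Or.inr ⟨fun h => o.lt_asymm hxy (hC.lt_of_one_lt_of_notMem h hx hxC),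
      o.trans _ _ _ hx hxy⟩

theorem flipCone_total (x : G) : o.flipCone C x ∨ x = 1 ∨ o.flipCone C x⁻¹ := by
  rcases o.total x 1 with h | h | h
  · by_cases hxC : x ∈ C
    · exact Or.inl (Or.inl ⟨hxC, h⟩)
    · exact Or.inr (Or.inr (Or.inr ⟨by simpa using hxC, (o.one_lt_inv_iff x).mpr h⟩))
  · exact Or.inr (Or.inl h)
  · by_cases hxC : x ∈ C
    · exact Or.inr (Or.inr (Or.inl ⟨inv_mem hxC, (o.inv_lt_one_iff x).mpr h⟩))
    · exact Or.inl (Or.inr ⟨hxC, h⟩)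

def flip (hC : o.IsConvex C) : LeftOrder G :=
  ofPositiveCone (o.flipCone C) (by simp [flipCone, o.irrefl]) (fun _ _ => hC.flipCone_mul)
    flipCone_total

variable {a b : G}

theorem flip_lt_iff_of_mem (hC : o.IsConvex C) (h : a⁻¹ * b ∈ C) :
    (o.flip hC).lt a b ↔ o.lt b a := by
  change o.flipCone C (a⁻¹ * b) ↔ _
  simp [flipCone, h, o.inv_mul_lt_one_iff]

theorem flip_lt_iff_of_notMem (hC : o.IsConvex C) (h : a⁻¹ * b ∉ C) :
    (o.flip hC).lt a b ↔ o.lt a b := by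
  change o.flipCone C (a⁻¹ * b) ↔ _
  simp [flipCone, h, o.one_lt_inv_mul_iff]

theorem IsConvex.flip {H : Subgroup G} (hH : o.IsConvex H) (hC : o.IsConvex C) (hHC : H ≤ C) :
    (o.flip hC).IsConvex H := by
  rintro g h₁ h₂ hh₁ hh₂ (hg₁ | rfl) (hg₂ | rfl)
  case inl.inl =>
    by_cases hgC : g ∈ C
    · rw [flip_lt_iff_of_mem hC (mul_mem (inv_mem (hHC hh₁)) hgC)] at hg₁
      rw [flip_lt_iff_of_mem hC (mul_mem (inv_mem hgC) (hHC hh₂))] at hg₂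
      exact hH g h₂ h₁ hh₂ hh₁ (Or.inl hg₂) (Or.inl hg₁)
    · rw [flip_lt_iff_of_notMem hC fun h => hgC (by simpa using mul_mem (hHC hh₁) h)] at hg₁
      rw [flip_lt_iff_of_notMem hC fun h => hgC (by simpa using mul_mem (hHC hh₂) (inv_mem h))]
        at hg₂
      exact hH g h₁ h₂ hh₁ hh₂ (Or.inl hg₁) (Or.inl hg₂)
  all_goals assumption

end Flip

variable (o : LeftOrder G)

theorem exists_ne_of_isConvex_lt {K L : Subgroup G} (hK : o.IsConvex K) (hL : o.IsConvex L)
    (hKL : K < L) :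
    ∃ o' : LeftOrder G, o' ≠ o ∧
      ∀ g, (g ∈ K ↔ g ∈ L) → (o'.lt 1 g ↔ o.lt 1 g) := by
  refine ⟨(o.flip hL).flip (hK.flip hL hKL.le), fun heq => ?_, fun g hg => ?_⟩
  · obtain ⟨g, hgL, hgK⟩ := SetLike.exists_of_lt hKL
    have hflip : o.lt 1 g ↔ o.lt g 1 := by
      nth_rw 1 [← heq]
      rw [flip_lt_iff_of_notMem _ (by simpa using hgK),
        flip_lt_iff_of_mem _ (by simpa using hgL)]
    exact hgK (o.eq_one_of_one_lt_iff_lt_one hflip ▸ K.one_mem)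
  · by_cases hgL : g ∈ L
    · rw [flip_lt_iff_of_mem _ (by simpa using hg.mpr hgL),
        flip_lt_iff_of_mem _ (by simpa using hgL)]
    · rw [flip_lt_iff_of_notMem _ (by simpa using hg.not.mpr hgL),
        flip_lt_iff_of_notMem _ (by simpa using hgL)]

theorem exists_ne_of_isConvex_ne {K L : Subgroup G} (hK : o.IsConvex K) (hL : o.IsConvex L)
    (hKL : K ≠ L) :
    ∃ o' : LeftOrder G, o' ≠ o ∧
      ∀ g, (g ∈ K ↔ g ∈ L) → (o'.lt 1 g ↔ o.lt 1 g) := by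
  rcases hK.le_total hL with hle | hle
  · exact o.exists_ne_of_isConvex_lt hK hL (hle.lt_of_ne hKL)
  · obtain ⟨o', hne, hagree⟩ := o.exists_ne_of_isConvex_lt hL hK (hle.lt_of_ne hKL.symm)
    exact ⟨o', hne, fun g hg => hagree g hg.symm⟩

theorem exists_finset_forall_eq_of_isOpen_singleton (h : IsOpen ({o} : Set (LeftOrder G))) :
    ∃ S : Finset G, ∀ o' : LeftOrder G, (∀ s ∈ S, o'.lt 1 s ↔ o.lt 1 s) → o' = o := by
  obtain ⟨U, hU, hpre⟩ := isOpen_induced_iff.mp h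
  have ho : o ∈ cone ⁻¹' U := hpre.symm ▸ rfl
  obtain ⟨S, u, hu, hsub⟩ := isOpen_pi_iff.mp hU o.cone ho
  refine ⟨S, fun o' ho' => ?_⟩
  have hU' : o' ∈ cone ⁻¹' U := hsub fun s hs => by
    rw [show o'.cone s = o.cone s from decide_eq_decide.mpr (ho' s hs)]
    exact (hu s hs).2
  rwa [hpre] at hU'

end LeftOrder

/-- If a left-ordered group `(G, ⪯)` has infinitely many convex
subgroups, then `⪯` is not an isolated point of `LO(G)`. -/
theorem not_isolated_of_infinitely_many_convex_subgroups
    {G : Type*} [Group G] (o : LeftOrder G)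
    (h : {H : Subgroup G | o.IsConvex H}.Infinite) :
    ¬ IsOpen ({o} : Set (LeftOrder G)) := by
  intro hopen
  obtain ⟨S, hS⟩ := o.exists_finset_forall_eq_of_isOpen_singleton hopen
  obtain ⟨K, hK, L, hL, hKL, htrace⟩ := h.exists_ne_map_eq_of_mapsTo
    (f := fun H : Subgroup G => (S : Set G) ∩ H) (fun _ _ => Set.inter_subset_left)
    S.finite_toSet.finite_subsets
  obtain ⟨o', hne, hagree⟩ := o.exists_ne_of_isConvex_ne hK hL hKL
  exact hne (hS o' fun s hs => hagree s (by simpa [hs] using Set.ext_iff.mp htrace s))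
end

section
/- Let Γ be a countable group with a faithful action on ℝ by orientation-preserving affine transformations (Γ ≤ Aff₊(ℝ)), and let ⪯ be a left-ordering on Γ induced from this action by a sequence of points (x₁, x₂, …) such that every nontrivial element of Γ moves some xᵢ. If Γ is non-abelian, then ⪯ is a limit of conjugate orderings g(⪯) (g ∈ Γ) distinct from ⪯; in particular ⪯ is not isolated in LO(Γ). -/
/-!
Conjugating `⪯` by an element acting as the translation `t ↦ t + c` gives the ordering induced
by the shifted points `xᵢ + c`. Since `Γ` is non-abelian, the translation amounts form a
nontrivial subgroup of `ℝ` that is stable under multiplication by the slope `a ≠ 1` of some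
element, hence dense. For all small shifts `c` to one side of `0` the sign of each element is
unchanged: for an element moving `x₀` by continuity, and for one fixing `x₀` because its sign is
decided at the first point `x_k ≠ x₀`, which also determines the side. So such conjugates agree
with `⪯` on any finite set, yet differ from it on a conjugate of a non-translation whose fixed
point lies between `x₀` and `x₀ + c`.
-/

open Filter Topology Set

namespace LeftOrder

variable {G : Type*} [Group G]

theorem conj_lt_one_iff (o : LeftOrder G) (g f : G) :
    (o.conj g).lt 1 f ↔ o.lt 1 (g * f * g⁻¹) := by
  show o.lt (g * 1 * g⁻¹) _ ↔ _
  rw [mul_one, mul_inv_cancel]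

theorem exists_finset_of_mem_isOpen {U : Set (LeftOrder G)} (hU : IsOpen U) {o : LeftOrder G}
    (ho : o ∈ U) :
    ∃ I : Finset G, ∀ o' : LeftOrder G, (∀ f ∈ I, o'.lt 1 f ↔ o.lt 1 f) → o' ∈ U := by
  obtain ⟨V, hV, rfl⟩ := isOpen_induced_iff.1 hU
  obtain ⟨I, w, hw, hsub⟩ := isOpen_pi_iff.1 hV _ ho
  refine ⟨I, fun o' ho' => hsub fun f hf => ?_⟩
  have hcone : o'.cone f = o.cone f := decide_eq_decide.2 (ho' f hf)
  rw [hcone]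
  exact (hw f hf).2

end LeftOrder

section AffineAction

variable {Γ : Type*} [Group Γ] (A : Γ →* Equiv.Perm ℝ)

def translationAmounts : AddSubgroup ℝ where
  carrier := {c | ∃ γ : Γ, ∀ t, A γ t = t + c}
  zero_mem' := ⟨1, by simp⟩
  add_mem' := by
    rintro c d ⟨γ, hγ⟩ ⟨δ, hδ⟩
    exact ⟨δ * γ, fun t => by simp [Equiv.Perm.mul_apply, hγ, hδ, add_assoc]⟩
  neg_mem' := by
    rintro c ⟨γ, hγ⟩
    refine ⟨γ⁻¹, fun t => ?_⟩
    rw [map_inv, Equiv.Perm.inv_eq_iff_eq, hγ, neg_add_cancel_right]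

variable {A}

theorem mem_translationAmounts_of_apply_eq_add {f g : Γ} {c : ℝ} (h : ∀ t, A f t = A g t + c) :
    c ∈ translationAmounts A :=
  ⟨f * g⁻¹, fun t => by simp [Equiv.Perm.mul_apply, h]⟩

theorem mem_translationAmounts_iff_of_map_add {h : Γ} {c d : ℝ}
    (hh : ∀ t, A h (t + c) = A h t + d) :
    c ∈ translationAmounts A ↔ d ∈ translationAmounts A := by
  constructor
  · rintro ⟨γ, hγ⟩
    exact mem_translationAmounts_of_apply_eq_add (f := h * γ) (g := h) fun t => by
      simp [Equiv.Perm.mul_apply, hγ, hh]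
  · rintro ⟨γ, hγ⟩
    refine ⟨h⁻¹ * γ * h, fun t => ?_⟩
    simp [Equiv.Perm.mul_apply, hγ, ← hh]

theorem exists_slope_ne_one (hfaith : Function.Injective A)
    (haff : ∀ γ : Γ, ∃ a b : ℝ, 0 < a ∧ ∀ t : ℝ, A γ t = a * t + b)
    (hna : ∃ u v : Γ, u * v ≠ v * u) :
    ∃ (h : Γ) (a b : ℝ), 0 < a ∧ a ≠ 1 ∧ ∀ t, A h t = a * t + b := by
  obtain ⟨u, v, huv⟩ := hna
  obtain ⟨a, b, ha, hu⟩ := haff u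
  obtain ⟨a', b', ha', hv⟩ := haff v
  by_cases h1 : a = 1
  · by_cases h1' : a' = 1
    · refine absurd (hfaith (Equiv.ext fun t => ?_)) huv
      simp only [map_mul, Equiv.Perm.mul_apply, hu, hv, h1, h1']
      ring
    · exact ⟨v, a', b', ha', h1', hv⟩
  · exact ⟨u, a, b, ha, h1, hu⟩

theorem translationAmounts_ne_bot (hfaith : Function.Injective A)
    (haff : ∀ γ : Γ, ∃ a b : ℝ, ∀ t : ℝ, A γ t = a * t + b)
    (hna : ∃ u v : Γ, u * v ≠ v * u) : translationAmounts A ≠ ⊥ := by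
  obtain ⟨u, v, huv⟩ := hna
  obtain ⟨a, b, hu⟩ := haff u
  obtain ⟨a', b', hv⟩ := haff v
  have hdiff : ∀ t, A (u * v) t = A (v * u) t + (a * b' + b - (a' * b + b')) := by
    intro t
    simp only [map_mul, Equiv.Perm.mul_apply, hu, hv]
    ring
  refine (AddSubgroup.ne_bot_iff_exists_ne_zero).2
    ⟨⟨_, mem_translationAmounts_of_apply_eq_add hdiff⟩, fun h0 => huv (hfaith ?_)⟩
  have hc0 : a * b' + b - (a' * b + b') = 0 := congrArg Subtype.val h0
  ext t
  rw [hdiff, hc0, add_zero]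

theorem dense_translationAmounts (hT : translationAmounts A ≠ ⊥) {h : Γ} {a b : ℝ}
    (hh : ∀ t, A h t = a * t + b) (ha : 0 < a) (ha1 : a ≠ 1) :
    Dense (translationAmounts A : Set ℝ) := by
  have hscale : ∀ c, c ∈ translationAmounts A ↔ a * c ∈ translationAmounts A :=
    fun c => mem_translationAmounts_iff_of_map_add fun t => by rw [hh, hh]; ring
  refine AddSubgroup.dense_of_no_min _ hT ?_
  rintro ⟨c, ⟨hcT, hc⟩, hmin⟩
  rcases ha1.lt_or_gt with hlt | hgt
  · exact (hmin ⟨(hscale c).1 hcT, mul_pos ha hc⟩).not_gt (mul_lt_of_lt_one_left hc hlt)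
  · have hmem : a⁻¹ * c ∈ translationAmounts A := by
      rwa [hscale, mul_inv_cancel_left₀ ha.ne']
    exact (hmin ⟨hmem, mul_pos (inv_pos.2 ha) hc⟩).not_gt
      (mul_lt_of_lt_one_left hc (inv_lt_one_of_one_lt₀ hgt))

variable (A) in
def InducedPositive (x : ℕ → ℝ) (f : Γ) : Prop :=
  ∃ i, (∀ j < i, A f (x j) = x j) ∧ x i < A f (x i)

section InducedPositive

variable {x : ℕ → ℝ} {f : Γ}

theorem not_inducedPositive_one : ¬InducedPositive A x 1 := by
  simp [InducedPositive]

theorem inducedPositive_iff_of_fixed_of_moved {k : ℕ} (hfix : ∀ j < k, A f (x j) = x j)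
    (hk : A f (x k) ≠ x k) : InducedPositive A x f ↔ x k < A f (x k) := by
  refine ⟨fun ⟨i, hi, hlt⟩ => ?_, fun hlt => ⟨k, hfix, hlt⟩⟩
  rcases lt_trichotomy i k with hik | rfl | hki
  · exact absurd (hfix i hik) hlt.ne'
  · exact hlt
  · exact absurd (hi k hki) hk

theorem inducedPositive_iff_of_apply_ne (h : A f (x 0) ≠ x 0) :
    InducedPositive A x f ↔ x 0 < A f (x 0) :=
  inducedPositive_iff_of_fixed_of_moved (fun j hj => absurd hj (Nat.not_lt_zero j)) h

theorem not_inducedPositive_iff_of_mul_neg {y : ℕ → ℝ}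
    (h : (A f (x 0) - x 0) * (A f (y 0) - y 0) < 0) :
    ¬(InducedPositive A x f ↔ InducedPositive A y f) := by
  have hx : A f (x 0) ≠ x 0 := fun e => by simp [e] at h
  have hy : A f (y 0) ≠ y 0 := fun e => by simp [e] at h
  rw [inducedPositive_iff_of_apply_ne hx, inducedPositive_iff_of_apply_ne hy,
    ← sub_pos (b := x 0), ← sub_pos (b := y 0)]
  rcases mul_neg_iff.1 h with ⟨h1, h2⟩ | ⟨h1, h2⟩
  · exact fun e => (e.1 h1).not_gt h2
  · exact fun e => (e.2 h2).not_gt h1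

theorem inducedPositive_inv_mul_mul_iff {γ : Γ} {c : ℝ} (hγ : ∀ t, A γ t = t + c) :
    InducedPositive A x (γ⁻¹ * f * γ) ↔ InducedPositive A (fun i => x i + c) f := by
  have hconj : ∀ t, A (γ⁻¹ * f * γ) t = A f (t + c) - c := by
    intro t
    rw [map_mul, map_mul, map_inv, Equiv.Perm.mul_apply, Equiv.Perm.mul_apply, hγ,
      Equiv.Perm.inv_eq_iff_eq, hγ, sub_add_cancel]
  simp only [InducedPositive, hconj, sub_eq_iff_eq_add, lt_sub_iff_add_lt]

theorem exists_sign_of_first_departure (x : ℕ → ℝ) :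
    ∃ s : ℝ, s ≠ 0 ∧
      ∀ k, (∀ j < k, x j = x 0) → x k ≠ x 0 → 0 < (x k - x 0) * s := by
  classical
  by_cases hex : ∃ k, x k ≠ x 0
  · refine ⟨x (Nat.find hex) - x 0, sub_ne_zero.2 (Nat.find_spec hex), fun k hk hk0 => ?_⟩
    have hfind : Nat.find hex = k :=
      le_antisymm (Nat.find_min' hex hk0) (not_lt.1 fun hlt => Nat.find_spec hex (hk _ hlt))
    rw [hfind]
    exact mul_self_pos.2 (sub_ne_zero.2 hk0)
  · exact ⟨1, one_ne_zero, fun k _ hk0 => absurd ⟨k, hk0⟩ hex⟩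

theorem eventually_inducedPositive_add_iff {s : ℝ}
    (hs : ∀ k, (∀ j < k, x j = x 0) → x k ≠ x 0 → 0 < (x k - x 0) * s)
    (hsep : f ≠ 1 → ∃ i, A f (x i) ≠ x i) {a b : ℝ} (hf : ∀ t, A f t = a * t + b) :
    ∀ᶠ t in 𝓝[>] (0 : ℝ),
      InducedPositive A (fun i => x i + t * s) f ↔ InducedPositive A x f := by
  have hdisp : ∀ y p, A f y - y = (a - 1) * (y - p) + (A f p - p) := by
    intro y p
    rw [hf, hf]
    ring
  by_cases h0 : A f (x 0) = x 0
  · rcases eq_or_ne f 1 with rfl | hf1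
    · exact .of_forall fun _ => iff_of_false not_inducedPositive_one not_inducedPositive_one
    classical
    have hex := hsep hf1
    set k := Nat.find hex
    have hfix : ∀ y, A f y - y = (a - 1) * (y - x 0) := by
      intro y
      rw [hdisp y (x 0), h0, sub_self, add_zero]
    have hk : A f (x k) ≠ x k := Nat.find_spec hex
    have hfixed : ∀ j < k, A f (x j) = x j := fun j hj => not_not.1 (Nat.find_min hex hj)
    -- a nontrivial affine map fixing `x 0` fixes no other point
    have ha : a - 1 ≠ 0 := fun ha => hk (sub_eq_zero.1 (by rw [hfix, ha, zero_mul]))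
    have hxj : ∀ j < k, x j = x 0 := fun j hj => by
      have := hfix (x j)
      rw [hfixed j hj, sub_self] at this
      exact sub_eq_zero.1 ((mul_eq_zero.1 this.symm).resolve_left ha)
    have hxk : x k ≠ x 0 := fun e => hk (by rw [e, h0])
    filter_upwards [self_mem_nhdsWithin] with t (ht : 0 < t)
    have hsign : 0 < (a - 1) * (t * s) * ((a - 1) * (x k - x 0)) :=
      calc (0 : ℝ) < (a - 1) * (a - 1) * (t * ((x k - x 0) * s)) :=
            mul_pos (mul_self_pos.2 ha) (mul_pos ht (hs k hxj hxk))
        _ = _ := by ring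
    have hmoved : A f (x 0 + t * s) ≠ x 0 + t * s := fun e => by
      have := hfix (x 0 + t * s)
      rw [e, sub_self, add_sub_cancel_left] at this
      exact left_ne_zero_of_mul hsign.ne' this.symm
    rw [inducedPositive_iff_of_apply_ne (x := fun i => x i + t * s) hmoved,
      inducedPositive_iff_of_fixed_of_moved hfixed hk, ← sub_pos, ← sub_pos (b := x k),
      hfix, hfix, add_sub_cancel_left]
    exact pos_iff_pos_of_mul_pos hsign
  · have hcont :
        Continuous fun t : ℝ => (A f (x 0 + t * s) - (x 0 + t * s)) * (A f (x 0) - x 0) := by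
      simp only [hf]
      fun_prop
    have hD : 0 < (A f (x 0 + 0 * s) - (x 0 + 0 * s)) * (A f (x 0) - x 0) := by
      simpa using mul_self_pos.2 (sub_ne_zero.2 h0)
    filter_upwards [nhdsWithin_le_nhds ((hcont.tendsto 0).eventually (lt_mem_nhds hD))] with t ht
    have hmoved : A f (x 0 + t * s) ≠ x 0 + t * s := fun e => by simp [e] at ht
    rw [inducedPositive_iff_of_apply_ne (x := fun i => x i + t * s) hmoved,
      inducedPositive_iff_of_apply_ne h0, ← sub_pos, ← sub_pos (b := x 0)]
    exact pos_iff_pos_of_mul_pos ht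

end InducedPositive

theorem exists_translationAmount_forall_inducedPositive_add_iff
    (hT : Dense (translationAmounts A : Set ℝ))
    (haff : ∀ γ : Γ, ∃ a b : ℝ, ∀ t : ℝ, A γ t = a * t + b) {x : ℕ → ℝ}
    (hsep : ∀ γ : Γ, γ ≠ 1 → ∃ i, A γ (x i) ≠ x i) (I : Finset Γ) :
    ∃ c ∈ translationAmounts A, c ≠ 0 ∧
      ∀ f ∈ I, InducedPositive A (fun i => x i + c) f ↔ InducedPositive A x f := by
  obtain ⟨s, hs0, hs⟩ := exists_sign_of_first_departure x
  have hev : ∀ᶠ t in 𝓝[>] (0 : ℝ),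
      ∀ f ∈ I, InducedPositive A (fun i => x i + t * s) f ↔ InducedPositive A x f :=
    (eventually_all_finset I).2 fun f _ =>
      let ⟨_, _, hf⟩ := haff f
      eventually_inducedPositive_add_iff hs (hsep f) hf
  obtain ⟨η, hη, hsub⟩ := mem_nhdsGT_iff_exists_Ioo_subset.1 hev
  obtain ⟨c, hcT, hc⟩ := hT.exists_mem_open
    (isOpen_Ioo.preimage (by fun_prop : Continuous fun t : ℝ => t / s))
    ⟨η / 2 * s, by
      rw [mem_preimage, mul_div_cancel_right₀ _ hs0]
      exact ⟨half_pos hη, half_lt_self hη⟩⟩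
  refine ⟨c, hcT, fun h => by simp [h] at hc, fun f hf => ?_⟩
  simpa only [div_mul_cancel₀ c hs0] using hsub hc f hf

theorem exists_not_inducedPositive_add_iff (hT : Dense (translationAmounts A : Set ℝ))
    {h : Γ} {a b : ℝ} (hh : ∀ t, A h t = a * t + b) (ha : a ≠ 1) (x : ℕ → ℝ) {c : ℝ}
    (hc : c ≠ 0) :
    ∃ f, ¬(InducedPositive A (fun i => x i + c) f ↔ InducedPositive A x f) := by
  set q := b / (1 - a)
  have hq : (1 - a) * q = b := mul_div_cancel₀ b (sub_ne_zero.2 ha.symm)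
  have hdisp : ∀ y, A h y - y = (a - 1) * (y - q) := by
    intro y
    rw [hh]
    linear_combination -hq
  -- conjugating `h` by a translation moves its fixed point `q` between `x 0` and `x 0 + c`
  obtain ⟨d, ⟨σ, hσ⟩, hd⟩ := hT.exists_mem_open
    (isOpen_lt (by fun_prop) continuous_const :
      IsOpen {d | (x 0 + c + d - q) * (x 0 + d - q) < 0})
    ⟨q - x 0 - c / 2, by
      show (x 0 + c + (q - x 0 - c / 2) - q) * (x 0 + (q - x 0 - c / 2) - q) < 0
      nlinarith [mul_self_pos.2 hc]⟩
  refine ⟨σ⁻¹ * h * σ, ?_⟩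
  rw [inducedPositive_inv_mul_mul_iff hσ, inducedPositive_inv_mul_mul_iff hσ]
  apply not_inducedPositive_iff_of_mul_neg
  simp only [hdisp]
  calc (a - 1) * (x 0 + c + d - q) * ((a - 1) * (x 0 + d - q))
      = (a - 1) * (a - 1) * ((x 0 + c + d - q) * (x 0 + d - q)) := by ring
    _ < 0 := mul_neg_of_pos_of_neg (mul_self_pos.2 (sub_ne_zero.2 ha)) hd

end AffineAction

theorem affine_induced_ordering_approximated_by_conjugates_general
    {Γ : Type*} [Group Γ]
    (A : Γ →* Equiv.Perm ℝ) (hfaith : Function.Injective A)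
    (haff : ∀ γ : Γ, ∃ a b : ℝ, 0 < a ∧ ∀ t : ℝ, A γ t = a * t + b)
    (x : ℕ → ℝ) (hsep : ∀ γ : Γ, γ ≠ 1 → ∃ i, A γ (x i) ≠ x i)
    (o : LeftOrder Γ)
    (hind : ∀ g h : Γ, o.lt g h ↔
      ∃ i, (∀ j < i, A (g⁻¹ * h) (x j) = x j) ∧ x i < A (g⁻¹ * h) (x i))
    (hna : ∃ a b : Γ, a * b ≠ b * a) :
    (∀ U : Set (LeftOrder Γ), IsOpen U → o ∈ U →
      ∃ g : Γ, o.conj g ≠ o ∧ o.conj g ∈ U) ∧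
    ¬ IsOpen ({o} : Set (LeftOrder Γ)) := by
  have haff' : ∀ γ : Γ, ∃ a b : ℝ, ∀ t : ℝ, A γ t = a * t + b :=
    fun γ => (haff γ).imp fun _ ⟨b, _, h⟩ => ⟨b, h⟩
  obtain ⟨h, a, b, ha, ha1, hh⟩ := exists_slope_ne_one hfaith haff hna
  have hT := dense_translationAmounts (translationAmounts_ne_bot hfaith haff' hna) hh ha ha1
  have hpos : ∀ f, o.lt 1 f ↔ InducedPositive A x f := fun f => by
    rw [hind, inv_one, one_mul]
    rfl
  have approx : ∀ U : Set (LeftOrder Γ), IsOpen U → o ∈ U →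
      ∃ g : Γ, o.conj g ≠ o ∧ o.conj g ∈ U := by
    intro U hU hoU
    obtain ⟨I, hI⟩ := LeftOrder.exists_finset_of_mem_isOpen hU hoU
    obtain ⟨c, ⟨g, hg⟩, hc, hagree⟩ :=
      exists_translationAmount_forall_inducedPositive_add_iff hT haff' hsep I
    have hconj : ∀ f, (o.conj g⁻¹).lt 1 f ↔ InducedPositive A (fun i => x i + c) f :=
      fun f => by
        rw [LeftOrder.conj_lt_one_iff, inv_inv, hpos, inducedPositive_inv_mul_mul_iff hg]
    obtain ⟨f, hf⟩ := exists_not_inducedPositive_add_iff hT hh ha1 x hc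
    refine ⟨g⁻¹, fun heq => hf ?_, hI _ fun f hfI => ?_⟩
    · rw [← hconj, heq, hpos]
    · rw [hconj, hagree f hfI, hpos]
  exact ⟨approx, fun hopen =>
    let ⟨_, hne, hmem⟩ := approx {o} hopen rfl
    hne hmem⟩

/-- Let `Γ` be a countable group acting faithfully on `ℝ` by
orientation-preserving affine maps, and let `⪯` be a left-ordering induced from
this action by a sequence of points `(x i)` separating the elements of `Γ`.
If `Γ` is non-abelian, then `⪯` is a limit of conjugates `g(⪯)` distinct from
`⪯`; in particular `⪯` is not isolated in `LO(Γ)`. -/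
theorem affine_induced_ordering_approximated_by_conjugates
    {Γ : Type*} [Group Γ] [Countable Γ]
    (A : Γ →* Equiv.Perm ℝ) (hfaith : Function.Injective A)
    (haff : ∀ γ : Γ, ∃ a b : ℝ, 0 < a ∧ ∀ t : ℝ, A γ t = a * t + b)
    (x : ℕ → ℝ) (hsep : ∀ γ : Γ, γ ≠ 1 → ∃ i, A γ (x i) ≠ x i)
    (o : LeftOrder Γ)
    (hind : ∀ g h : Γ, o.lt g h ↔
      ∃ i, (∀ j < i, A (g⁻¹ * h) (x j) = x j) ∧ x i < A (g⁻¹ * h) (x i))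
    (hna : ∃ a b : Γ, a * b ≠ b * a) :
    (∀ U : Set (LeftOrder Γ), IsOpen U → o ∈ U →
      ∃ g : Γ, o.conj g ≠ o ∧ o.conj g ∈ U) ∧
    ¬ IsOpen ({o} : Set (LeftOrder Γ)) :=
  affine_induced_ordering_approximated_by_conjugates_general A hfaith haff x hsep o hind hna
end

section
/- Let G be a countable group, ⪯ a Conradian left-ordering of G, and consider a dynamical realization of (G,⪯). Let N ⊆ G be the set of elements having a fixed point in ℝ. Then N is a normal subgroup of G. Moreover, if there is g ∈ G having no fixed point, then G/N is a nontrivial torsion-free abelian group which acts freely on the nonempty set of global fixed points of N. -/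
/-- `ρ` is a dynamical realization of the left-ordered group `(G, ⪯)`: a
faithful action of `G` on `ℝ` by orientation-preserving homeomorphisms with no
global fixed point, such that `f ≺ g ↔ f(0) < g(0)`, and the fixed-point set of
every nontrivial element has empty interior. -/
def IsDynRealization {G : Type*} [Group G] (o : LeftOrder G) (ρ : G → ℝ → ℝ) : Prop :=
  (∀ g : G, StrictMono (ρ g)) ∧
  (∀ g : G, Function.Surjective (ρ g)) ∧
  (ρ 1 = id) ∧
  (∀ g h : G, ρ (g * h) = ρ g ∘ ρ h) ∧
  (¬ ∃ x : ℝ, ∀ g : G, ρ g x = x) ∧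
  (∀ f g : G, o.lt f g ↔ ρ f 0 < ρ g 0) ∧
  (∀ g : G, g ≠ 1 → interior {x : ℝ | ρ g x = x} = ∅)

section Holder

variable {α : Type*} [Group α] [LinearOrder α] [MulLeftMono α]

theorem zpow_le_zpow_of_one_le {h : α} (hh : 1 ≤ h) {m n : ℤ} (hmn : m ≤ n) : h ^ m ≤ h ^ n :=
  calc h ^ m ≤ h ^ m * h ^ (n - m) := le_mul_of_one_le_right' (one_le_zpow hh (sub_nonneg.2 hmn))
    _ = h ^ n := by rw [← zpow_add, add_sub_cancel]

variable [MulRightMono α]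

theorem exists_one_lt_mul_self_le (hdense : ∀ ε : α, 1 < ε → ∃ x, 1 < x ∧ x < ε) {c : α}
    (hc : 1 < c) : ∃ h : α, 1 < h ∧ h * h ≤ c := by
  obtain ⟨x, hx, hxc⟩ := hdense c hc
  rcases le_or_gt (x * x) c with hle | hlt
  · exact ⟨x, hx, hle⟩
  refine ⟨x⁻¹ * c, lt_inv_mul_iff_lt.2 hxc, ?_⟩
  calc x⁻¹ * c * (x⁻¹ * c) = x⁻¹ * (c * x⁻¹) * c := by group
    _ ≤ x⁻¹ * x * c := by gcongr; exact mul_inv_le_iff_le_mul.2 hlt.le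
    _ = c := by group

variable (harch : ∀ (x : α) {h : α}, 1 < h → ∃ n : ℕ, x < h ^ n)
include harch

theorem exists_zpow_le_lt {h : α} (hh : 1 < h) (g : α) :
    ∃ n : ℤ, h ^ n ≤ g ∧ g < h ^ (n + 1) := by
  obtain ⟨m, hm⟩ := harch g hh
  obtain ⟨k, hk⟩ := harch g⁻¹ hh
  have hbdd : ∃ m' : ℤ, ∀ n : ℤ, h ^ n ≤ g → n ≤ m' := ⟨m, fun n hn => by
    by_contra! hmn
    exact (hm.trans_le (by simpa using zpow_le_zpow_of_one_le hh.le hmn.le)).not_ge hn⟩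
  have hne : ∃ n : ℤ, h ^ n ≤ g := ⟨-k, by simpa using (inv_lt'.1 hk).le⟩
  obtain ⟨n, hn, hmax⟩ := Int.exists_greatest_of_bdd hbdd hne
  exact ⟨n, hn, lt_of_not_ge fun h' => by linarith [hmax _ h']⟩

theorem exists_eq_zpow_of_forall_le {ε : α} (hε : 1 < ε) (hmin : ∀ x : α, 1 < x → ε ≤ x)
    (g : α) : ∃ n : ℤ, g = ε ^ n := by
  obtain ⟨n, hn, hn'⟩ := exists_zpow_le_lt harch hε g
  refine ⟨n, le_antisymm (not_lt.1 fun hlt => ?_) hn⟩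
  have h₁ : 1 < ε ^ (-n) * g := by rw [zpow_neg]; exact lt_inv_mul_iff_lt.2 hlt
  have h₂ : ε ^ (-n) * g < ε := by
    rw [zpow_neg, inv_mul_lt_iff_lt_mul, ← zpow_add_one]; exact hn'
  exact (hmin _ h₁).not_gt h₂

theorem mul_comm_of_archimedean (a b : α) : a * b = b * a := by
  by_cases hmin : ∃ ε : α, 1 < ε ∧ ∀ x, 1 < x → ε ≤ x
  · obtain ⟨ε, hε, hmin⟩ := hmin
    obtain ⟨m, rfl⟩ := exists_eq_zpow_of_forall_le harch hε hmin a
    obtain ⟨n, rfl⟩ := exists_eq_zpow_of_forall_le harch hε hmin b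
    exact (Commute.zpow_zpow_self ε m n).eq
  push Not at hmin
  have key : ∀ a b : α, ¬ b * a < a * b := by
    intro a b hlt
    obtain ⟨h, hh, hc⟩ := exists_one_lt_mul_self_le hmin (c := (b * a)⁻¹ * (a * b))
      (lt_inv_mul_iff_lt.2 hlt)
    obtain ⟨m, hm, hm'⟩ := exists_zpow_le_lt harch hh a
    obtain ⟨n, hn, hn'⟩ := exists_zpow_le_lt harch hh b
    have : (b * a)⁻¹ * (a * b) < h * h :=
      calc (b * a)⁻¹ * (a * b) < (h ^ n * h ^ m)⁻¹ * (h ^ (m + 1) * h ^ (n + 1)) :=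
            mul_lt_mul_of_le_of_lt (inv_le_inv_iff.2 (mul_le_mul' hn hm))
              (mul_lt_mul_of_lt_of_lt hm' hn')
        _ = h * h := by group; rw [zpow_two]
    exact hc.not_gt this
  exact le_antisymm (not_lt.1 (key a b)) (not_lt.1 (key b a))

end Holder

theorem LeftOrder.lt_iff_one_lt_inv_mul_s13 {G : Type*} [Group G] (o : LeftOrder G) {a b : G} :
    o.lt a b ↔ o.lt 1 (a⁻¹ * b) :=
  ⟨fun h => by simpa using o.mul_left _ _ a⁻¹ h, fun h => by simpa using o.mul_left _ _ a h⟩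

open MulAction Set

/-- For a dynamical realization, this is the Conrad property of the left orders
`u ≺ v ↔ u • p < v • p` attached to the orbit points `p`. -/
def IsConradianOrbit (G : Type*) {α : Type*} [Group G] [MulAction G α] [LT α] (x₀ : α) : Prop :=
  ∀ p ∈ orbit G x₀, ∀ u v : G, p < u • p → p < v • p → v • p < u • v • v • p

theorem LeftOrder.IsConradian.isConradianOrbit {G α : Type*} [Group G] [MulAction G α] [LT α]
    {o : LeftOrder G} (hc : o.IsConradian) {x₀ : α}
    (hord : ∀ f g : G, o.lt f g ↔ f • x₀ < g • x₀) : IsConradianOrbit G x₀ := by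
  rintro _ ⟨h, rfl⟩ u v hu hv
  have hconj : ∀ w : G, h • x₀ < w • h • x₀ → o.lt 1 (h⁻¹ * (w * h)) := fun w hw => by
    rwa [← o.lt_iff_one_lt_inv_mul_s13, hord, mul_smul]
  have := o.mul_left _ _ h (hc _ _ (hconj u hu) (hconj v hv))
  rw [hord] at this
  simpa [mul_smul] using this

section OrderedAction

variable {G α : Type*} [Group G] [MulAction G α]

theorem normal_of_mem_iff_exists_smul_eq {N : Subgroup G} (hN : ∀ g, g ∈ N ↔ ∃ x : α, g • x = x) :
    N.Normal where
  conj_mem n hn g := by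
    obtain ⟨x, hx⟩ := (hN n).1 hn
    exact (hN _).2 ⟨g • x, by simp [mul_smul, hx]⟩

theorem Subgroup.Normal.smul_smul_eq {N : Subgroup G} (hN : N.Normal) {ξ : α}
    (hξ : ∀ n ∈ N, n • ξ = ξ) (g : G) : ∀ n ∈ N, n • g • ξ = g • ξ :=
  fun n hn => by simpa [mul_smul, inv_smul_eq_iff] using hξ _ (hN.conj_mem n hn g⁻¹)

section Preorder

variable [Preorder α] [CovariantClass G α HSMul.hSMul LE.le] {g : G} {x y : α}

theorem smul_le_smul_iff_left : g • x ≤ g • y ↔ x ≤ y :=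
  ⟨fun h => by simpa using smul_le_smul_left g⁻¹ h, smul_le_smul_left g⟩

theorem smul_lt_smul_iff_left : g • x < g • y ↔ x < y := by
  simp only [lt_iff_le_not_ge, smul_le_smul_iff_left]

theorem lt_pow_smul (h : x < g • x) {n : ℕ} (hn : n ≠ 0) : x < g ^ n • x := by
  obtain ⟨k, rfl⟩ := Nat.exists_eq_succ_of_ne_zero hn
  rw [pow_succ, mul_smul]
  exact h.trans_le (le_pow_smul (smul_le_smul_left g h.le) k)

end Preorder

section ConditionallyComplete

variable [ConditionallyCompleteLinearOrder α] [CovariantClass G α HSMul.hSMul LE.le]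
  {g : G} {s : Set α}

theorem smul_csSup_le (hne : s.Nonempty) (hbdd : BddAbove s) (hs : ∀ x ∈ s, g • x ∈ s) :
    g • sSup s ≤ sSup s := by
  rw [← smul_le_smul_iff_left (g := g⁻¹), inv_smul_smul]
  exact csSup_le hne fun x hx => by simpa using smul_le_smul_left g⁻¹ (le_csSup hbdd (hs x hx))

theorem csSup_le_smul_csSup (hne : s.Nonempty) (hbdd : BddAbove s) (hs : ∀ x ∈ s, x ≤ g • x) :
    sSup s ≤ g • sSup s :=
  csSup_le hne fun x hx => (hs x hx).trans (smul_le_smul_left g (le_csSup hbdd hx))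

theorem smul_csSup_eq (hne : s.Nonempty) (hbdd : BddAbove s) (hs : ∀ x ∈ s, g • x ∈ s)
    (hs' : ∀ x ∈ s, g⁻¹ • x ∈ s) : g • sSup s = sSup s :=
  le_antisymm (smul_csSup_le hne hbdd hs)
    (by simpa using smul_le_smul_left g (smul_csSup_le hne hbdd hs'))

theorem le_smul_csInf (hne : s.Nonempty) (hbdd : BddBelow s) (hs : ∀ x ∈ s, g • x ∈ s) :
    sInf s ≤ g • sInf s := by
  rw [← smul_le_smul_iff_left (g := g⁻¹), inv_smul_smul]
  exact le_csInf hne fun x hx => by simpa using smul_le_smul_left g⁻¹ (csInf_le hbdd (hs x hx))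

theorem smul_csInf_eq (hne : s.Nonempty) (hbdd : BddBelow s) (hs : ∀ x ∈ s, g • x ∈ s)
    (hs' : ∀ x ∈ s, g⁻¹ • x ∈ s) : g • sInf s = sInf s :=
  le_antisymm (by simpa using smul_le_smul_left g (le_smul_csInf hne hbdd hs'))
    (le_smul_csInf hne hbdd hs)

theorem exists_smul_eq_of_pow_smul_le {z t : α} (hz : z ≤ g • z) (ht : ∀ k : ℕ, g ^ k • z ≤ t) :
    ∃ y ∈ Icc z t, g • y = y := by
  set s := range fun k : ℕ => g ^ k • z
  have hne : s.Nonempty := range_nonempty _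
  have hbdd : BddAbove s := ⟨t, forall_mem_range.2 ht⟩
  refine ⟨sSup s, ⟨le_csSup hbdd ⟨0, by simp⟩, csSup_le hne (forall_mem_range.2 ht)⟩,
    le_antisymm (smul_csSup_le hne hbdd ?_) (csSup_le_smul_csSup hne hbdd ?_)⟩
  · exact forall_mem_range.2 fun k => ⟨k + 1, by simp only [pow_succ', mul_smul]⟩
  · refine forall_mem_range.2 fun k => ?_
    rw [← mul_smul, ← pow_succ', pow_succ, mul_smul]
    exact smul_le_smul_left _ hz

theorem exists_lt_pow_smul {z t : α} (hg : ∀ x ∈ Icc z t, x < g • x) :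
    ∃ k : ℕ, t < g ^ k • z := by
  by_contra! h
  obtain ⟨y, hy, hgy⟩ := exists_smul_eq_of_pow_smul_le (hg z ⟨le_rfl, by simpa using h 0⟩).le h
  exact (hg y hy).ne' hgy

theorem not_bddAbove_orbit (hfree : ¬ ∃ x : α, ∀ g : G, g • x = x) (x₀ : α) :
    ¬ BddAbove (orbit G x₀) := fun hbdd =>
  hfree ⟨_, fun g => smul_csSup_eq ⟨x₀, mem_orbit_self x₀⟩ hbdd
    (fun _ hx => mem_orbit_of_mem_orbit g hx) (fun _ hx => mem_orbit_of_mem_orbit g⁻¹ hx)⟩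

section Conradian

variable {x₀ a b : α} {f h : G}

theorem smul_lt_of_mem_orbit (hconr : IsConradianOrbit G x₀) (hgb : g • b = b)
    (hg : ∀ x ∈ Ico a b, x < g • x) (hhb : h • b < b) {z : α} (hz : z ∈ orbit G x₀)
    (hza : a < z) (hzh : z < h • b) : g • z < h • b := by
  have hzb : z < b := hzh.trans hhb
  have hhz : h⁻¹ • z < b := by rwa [← smul_lt_smul_iff_left (g := h), smul_inv_smul]
  obtain ⟨k, hk⟩ := exists_lt_pow_smul (g := g) (z := z) (t := h⁻¹ • z)
    fun x hx => hg x ⟨hza.le.trans hx.1, hx.2.trans_lt hhz⟩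
  have hpow : g ^ (k + 2) • z < b := by
    simpa [mem_stabilizer_iff.1 (pow_mem (mem_stabilizer_iff.2 hgb) (k + 2))] using
      smul_lt_smul_iff_left (g := g ^ (k + 2)).2 hzb
  have hu : z < (h * g ^ k) • z := by
    rwa [mul_smul, ← smul_lt_smul_iff_left (g := h⁻¹), inv_smul_smul]
  calc g • z < (h * g ^ k) • g • g • z := hconr z hz _ _ hu (hg z ⟨hza.le, hzb⟩)
    _ = h • g ^ (k + 2) • z := by simp only [mul_smul, pow_succ]
    _ < h • b := smul_lt_smul_iff_left.2 hpow

theorem disjoint_orbit_Ioo (hconr : IsConradianOrbit G x₀) (hgb : g • b = b)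
    (hg : ∀ x ∈ Ico a b, x < g • x) (hhb : h • b < b) :
    Disjoint (orbit G x₀) (Ioo a (h • b)) := by
  rw [Set.disjoint_left]
  intro z hz hzI
  set S := orbit G x₀ ∩ Ioo a (h • b)
  have hne : S.Nonempty := ⟨z, hz, hzI⟩
  have hbdd : BddAbove S := ⟨h • b, fun x hx => hx.2.2.le⟩
  have hS : ∀ x ∈ S, a ≤ x ∧ x < b := fun x hx => ⟨hx.2.1.le, hx.2.2.trans hhb⟩
  -- `g` maps `S` into itself, so `sSup S ∈ [a, b)` is a fixed point of `g`.
  have hfix : g • sSup S = sSup S := le_antisymm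
    (smul_csSup_le hne hbdd fun x hx => ⟨mem_orbit_of_mem_orbit g hx.1,
      hx.2.1.trans (hg x (hS x hx)), smul_lt_of_mem_orbit hconr hgb hg hhb hx.1 hx.2.1 hx.2.2⟩)
    (csSup_le_smul_csSup hne hbdd fun x hx => (hg x (hS x hx)).le)
  exact (hg _ ⟨(hS z ⟨hz, hzI⟩).1.trans (le_csSup hbdd ⟨hz, hzI⟩),
    (csSup_le hne fun x hx => hx.2.2.le).trans_lt hhb⟩).ne' hfix

theorem exists_smul_eq_and_smul_eq (hconr : IsConradianOrbit G x₀)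
    (hunb : ¬ BddAbove (orbit G x₀)) (hab : a < b) (hfa : f • a = a) (hfb : b < f • b)
    (hgb : g • b = b) (hg : ∀ x ∈ Ico a b, x < g • x) : ∃ q : α, f • q = q ∧ g • q = q := by
  have hfa' : f⁻¹ • a = a := inv_smul_eq_iff.2 hfa.symm
  have hgb' : g⁻¹ • b = b := inv_smul_eq_iff.2 hgb.symm
  have hgap : ∀ z ∈ orbit G x₀, z ∉ Ioo a b := fun z hz ⟨hza, hzb⟩ =>
    Set.disjoint_left.1 (disjoint_orbit_Ioo hconr hgb hg (h := f⁻¹)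
      (by rwa [← smul_lt_smul_iff_left (g := f), smul_inv_smul]))
      (mem_orbit_of_mem_orbit f⁻¹ hz)
      ⟨hfa' ▸ smul_lt_smul_iff_left.2 hza, smul_lt_smul_iff_left.2 hzb⟩
  set E := orbit G x₀ ∩ Ici b
  obtain ⟨y, hy, hby⟩ := not_bddAbove_iff.1 hunb b
  have hne : E.Nonempty := ⟨y, hy, hby.le⟩
  have hbdd : BddBelow E := ⟨b, fun x hx => hx.2⟩
  have hE : ∀ u : G, (∀ x ∈ E, b ≤ u • x) → ∀ x ∈ E, u • x ∈ E :=
    fun u hu x hx => ⟨mem_orbit_of_mem_orbit u hx.1, hu x hx⟩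
  refine ⟨sInf E, smul_csInf_eq hne hbdd (hE f ?_) (hE f⁻¹ ?_),
    smul_csInf_eq hne hbdd (hE g ?_) (hE g⁻¹ ?_)⟩
  · exact fun x hx => hfb.le.trans (smul_le_smul_left f hx.2)
  · exact fun x hx => not_lt.1 fun hlt => hgap _ (mem_orbit_of_mem_orbit _ hx.1)
      ⟨hfa' ▸ smul_lt_smul_iff_left.2 (hab.trans_le hx.2), hlt⟩
  · exact fun x hx => hgb ▸ smul_le_smul_left g hx.2
  · exact fun x hx => hgb' ▸ smul_le_smul_left g⁻¹ hx.2

end Conradian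

section Stabilizer

variable {ξ : α} (hpos : ∀ g : G, ξ < g • ξ → ∀ x : α, x < g • x)
include hpos

theorem smul_lt_smul_of_smul_lt {u v : G} (h : u • ξ < v • ξ) (x : α) : u • x < v • x := by
  have := hpos (u⁻¹ * v) (by rwa [mul_smul, ← smul_lt_smul_iff_left (g := u), smul_inv_smul]) x
  rwa [mul_smul, ← smul_lt_smul_iff_left (g := u), smul_inv_smul] at this

theorem mul_smul_le_mul_smul [(stabilizer G ξ).Normal] {u v : G} (h : u • ξ ≤ v • ξ) (w : G) :
    (u * w) • ξ ≤ (v * w) • ξ := by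
  rw [mul_smul, mul_smul]
  rcases h.lt_or_eq with hlt | heq
  · exact (smul_lt_smul_of_smul_lt hpos hlt (w • ξ)).le
  · have : u⁻¹ * v ∈ stabilizer G ξ := by simp [mul_smul, ← heq]
    have := ‹(stabilizer G ξ).Normal›.conj_mem _ this w⁻¹
    simp [mul_smul, inv_smul_eq_iff] at this
    exact this.ge

theorem mem_stabilizer_of_pow_mem {g : G} {n : ℕ} (hn : n ≠ 0) (h : g ^ n ∈ stabilizer G ξ) :
    g ∈ stabilizer G ξ := by
  rw [mem_stabilizer_iff] at h ⊢
  by_contra hne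
  rcases lt_or_gt_of_ne hne with hlt | hlt
  · have hinv : ξ < g⁻¹ • ξ := by rwa [← smul_lt_smul_iff_left (g := g), smul_inv_smul]
    have := lt_pow_smul (hpos g⁻¹ hinv ξ) hn
    rw [inv_pow, inv_smul_eq_iff.2 h.symm] at this
    exact this.false
  · have := lt_pow_smul (hpos g hlt ξ) hn
    rw [h] at this
    exact this.false

theorem commutator_mem_stabilizer [(stabilizer G ξ).Normal] (a b : G) :
    a * b * a⁻¹ * b⁻¹ ∈ stabilizer G ξ := by
  set Q := G ⧸ stabilizer G ξ
  let f : Q → α := fun q => (orbitEquivQuotientStabilizer G ξ).symm q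
  let _ : LinearOrder Q := LinearOrder.lift' f (Subtype.val_injective.comp (Equiv.injective _))
  have hle : ∀ p q : G, (p : Q) ≤ q ↔ p • ξ ≤ q • ξ := fun _ _ => Iff.rfl
  have hlt : ∀ p q : G, (p : Q) < q ↔ p • ξ < q • ξ := fun _ _ => Iff.rfl
  have : MulLeftMono Q := ⟨fun p q r hqr => by
    induction p using QuotientGroup.induction_on
    induction q using QuotientGroup.induction_on
    induction r using QuotientGroup.induction_on
    rw [← QuotientGroup.mk_mul, ← QuotientGroup.mk_mul, hle, mul_smul, mul_smul]
    exact smul_le_smul_left _ hqr⟩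
  have : MulRightMono Q := ⟨fun p q r hqr => by
    induction p using QuotientGroup.induction_on
    induction q using QuotientGroup.induction_on
    induction r using QuotientGroup.induction_on
    exact mul_smul_le_mul_smul hpos hqr _⟩
  have harch : ∀ (x : Q) {h : Q}, 1 < h → ∃ n : ℕ, x < h ^ n := fun x h hh => by
    induction x using QuotientGroup.induction_on
    induction h using QuotientGroup.induction_on with | H h =>
    rw [← QuotientGroup.mk_one, hlt, one_smul] at hh
    obtain ⟨n, hn⟩ := exists_lt_pow_smul fun x _ => hpos h hh x
    exact ⟨n, by rwa [← QuotientGroup.mk_pow, hlt]⟩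
  have := mul_comm_of_archimedean harch (a : Q) b
  rw [← QuotientGroup.eq_one_iff]
  simp [this]

end Stabilizer

variable [TopologicalSpace α] [OrderTopology α] [DenselyOrdered α] {a x : α}

theorem continuous_smul_of_covariant (g : G) : Continuous (g • · : α → α) :=
  (smul_mono_right g).continuous_of_surjective (MulAction.surjective g)

theorem lt_smul_of_isPreconnected (hs : IsPreconnected s) (hfix : ∀ y ∈ s, g • y ≠ y)
    (ha : a ∈ s) (hga : a < g • a) (hx : x ∈ s) : x < g • x := by
  by_contra! h
  obtain ⟨y, hy, hgy⟩ := hs.intermediate_value₂ hx ha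
    (continuous_smul_of_covariant g).continuousOn continuous_id.continuousOn h hga.le
  exact hfix y hy hgy

theorem forall_lt_smul_of_lt_smul (hfix : ∀ y : α, g • y ≠ y) (hga : a < g • a) (x : α) :
    x < g • x :=
  lt_smul_of_isPreconnected isPreconnected_univ (fun y _ => hfix y) trivial hga trivial

theorem forall_lt_smul_or_forall_lt_inv_smul (hfix : ∀ y : α, g • y ≠ y) :
    (∀ x : α, x < g • x) ∨ ∀ x : α, x < g⁻¹ • x := by
  by_cases h : ∃ a : α, a < g • a
  · obtain ⟨a, ha⟩ := h
    exact Or.inl (forall_lt_smul_of_lt_smul hfix ha)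
  · push Not at h
    refine Or.inr fun x => ?_
    simpa using smul_lt_smul_iff_left (g := g⁻¹).2 ((h x).lt_of_ne (hfix x))

section NoCrossing

variable {x₀ b : α} {f : G}

theorem not_forall_lt_smul_smul_of_lt (hconr : IsConradianOrbit G x₀)
    (hunb : ¬ BddAbove (orbit G x₀)) (hfa : f • a = a) (hgb : g • b = b) (hab : a < b) :
    ¬ ∀ x : α, x < f • g • x := by
  intro hfg
  have hga : a < g • a := by rw [← smul_lt_smul_iff_left (g := f), hfa]; exact hfg a
  set B := {x | g • x = x} ∩ Ici a
  have hne : B.Nonempty := ⟨b, hgb, hab.le⟩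
  have hbdd : BddBelow B := ⟨a, fun x hx => hx.2⟩
  obtain ⟨hgb₁, hab₁⟩ : g • sInf B = sInf B ∧ a ≤ sInf B :=
    ((isClosed_eq (continuous_smul_of_covariant g) continuous_id).inter isClosed_Ici).csInf_mem
      hne hbdd
  have hab₁' : a < sInf B := hab₁.lt_of_ne fun h => hga.ne' (h ▸ hgb₁)
  have hg : ∀ x ∈ Ico a (sInf B), x < g • x := fun x hx =>
    lt_smul_of_isPreconnected isPreconnected_Ico
      (fun y hy hgy => (csInf_le hbdd ⟨hgy, hy.1⟩).not_gt hy.2) ⟨le_rfl, hab₁'⟩ hga hx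
  have hfb : sInf B < f • sInf B := by simpa [hgb₁] using hfg (sInf B)
  obtain ⟨q, hfq, hgq⟩ := exists_smul_eq_and_smul_eq hconr hunb hab₁' hfa hfb hgb₁ hg
  exact (hfg q).ne (by rw [hgq, hfq])

theorem not_forall_lt_smul_smul (hconr : IsConradianOrbit G x₀) (hunb : ¬ BddAbove (orbit G x₀))
    (hf : ∃ a : α, f • a = a) (hg : ∃ b : α, g • b = b) : ¬ ∀ x : α, x < f • g • x := by
  obtain ⟨a, ha⟩ := hf
  obtain ⟨b, hb⟩ := hg
  intro hfg
  rcases lt_trichotomy a b with hab | rfl | hba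
  · exact not_forall_lt_smul_smul_of_lt hconr hunb ha hb hab hfg
  · exact (hfg a).ne (by rw [hb, ha])
  · exact not_forall_lt_smul_smul_of_lt hconr hunb hb ha hba fun x =>
      smul_lt_smul_iff_left.1 (hfg (f • x))

theorem exists_mul_smul_eq (hconr : IsConradianOrbit G x₀) (hunb : ¬ BddAbove (orbit G x₀))
    (hf : ∃ a : α, f • a = a) (hg : ∃ b : α, g • b = b) : ∃ x : α, (f * g) • x = x := by
  by_contra! hfix
  rcases forall_lt_smul_or_forall_lt_inv_smul hfix with hpos | hneg
  · exact not_forall_lt_smul_smul hconr hunb hf hg fun x => by simpa [mul_smul] using hpos x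
  · obtain ⟨a, ha⟩ := hf
    obtain ⟨b, hb⟩ := hg
    exact not_forall_lt_smul_smul hconr hunb ⟨b, inv_smul_eq_iff.2 hb.symm⟩
      ⟨a, inv_smul_eq_iff.2 ha.symm⟩ fun x => by simpa [mul_smul] using hneg x

end NoCrossing

section FixedPointSubgroup

variable {N : Subgroup G} (hN : ∀ g, g ∈ N ↔ ∃ x : α, g • x = x)
include hN

theorem smul_lt_smul_of_mem {n : G} (hg : ∀ x : α, x < g • x) (hn : n ∈ N) (x : α) :
    n • x < g • x := by
  have hfix : ∀ y : α, (g⁻¹ * n) • y ≠ y := fun y hy => by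
    have hgn : g = n * (g⁻¹ * n)⁻¹ := by group
    obtain ⟨z, hz⟩ := (hN g).1 (hgn ▸ N.mul_mem hn (N.inv_mem ((hN _).2 ⟨y, hy⟩)))
    exact (hg z).ne' hz
  rcases forall_lt_smul_or_forall_lt_inv_smul hfix with hpos | hneg
  · obtain ⟨z, hz⟩ := (hN n).1 hn
    have h₁ : z < g⁻¹ • z := by simpa [mul_smul, hz] using hpos z
    exact ((h₁.trans (by simpa using hg (g⁻¹ • z))).false).elim
  · have := hneg x
    rwa [mul_inv_rev, inv_inv, mul_smul, ← smul_lt_smul_iff_left (g := n), smul_inv_smul] at this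

theorem exists_forall_mem_smul_eq [Nonempty α] (hg₀ : ∃ g : G, ∀ x : α, g • x ≠ x) :
    ∃ ξ : α, ∀ n ∈ N, n • ξ = ξ := by
  obtain ⟨g₀, hg₀⟩ := hg₀
  obtain ⟨g, hg⟩ : ∃ g : G, ∀ x : α, x < g • x :=
    (forall_lt_smul_or_forall_lt_inv_smul hg₀).elim (⟨g₀, ·⟩) (⟨g₀⁻¹, ·⟩)
  obtain ⟨x₀⟩ := ‹Nonempty α›
  set S := (· • x₀) '' (N : Set G)
  have hne : S.Nonempty := ⟨x₀, 1, N.one_mem, one_smul G x₀⟩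
  have hbdd : BddAbove S :=
    ⟨g • x₀, forall_mem_image.2 fun n hn => (smul_lt_smul_of_mem hN hg hn x₀).le⟩
  have hS : ∀ n ∈ N, ∀ x ∈ S, n • x ∈ S := fun n hn => forall_mem_image.2 fun m hm =>
    ⟨n * m, N.mul_mem hn hm, mul_smul n m x₀⟩
  exact ⟨sSup S, fun n hn => smul_csSup_eq hne hbdd (hS n hn) (hS n⁻¹ (N.inv_mem hn))⟩

end FixedPointSubgroup

end ConditionallyComplete

end OrderedAction

theorem conradian_fixed_point_subgroup_general
    {G : Type*} [Group G]
    (o : LeftOrder G) (hc : o.IsConradian)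
    (ρ : G → ℝ → ℝ) (hρ : IsDynRealization o ρ) :
    ∃ N : Subgroup G, N.Normal ∧ (N : Set G) = {g : G | ∃ x : ℝ, ρ g x = x} ∧
      ((∃ g : G, ∀ x : ℝ, ρ g x ≠ x) →
        -- `G/N` is nontrivial:
        (∃ g : G, g ∉ N) ∧
        -- `G/N` is abelian:
        (∀ g h : G, g * h * g⁻¹ * h⁻¹ ∈ N) ∧
        -- `G/N` is torsion-free:
        (∀ (g : G) (n : ℕ), 0 < n → g ^ n ∈ N → g ∈ N) ∧
        -- the set of global fixed points of `N` is nonempty: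
        {x : ℝ | ∀ g ∈ N, ρ g x = x}.Nonempty ∧
        -- `G` (hence `G/N`) acts on this set:
        (∀ g : G, ∀ x ∈ {x : ℝ | ∀ g ∈ N, ρ g x = x},
          ρ g x ∈ {x : ℝ | ∀ g ∈ N, ρ g x = x}) ∧
        -- and the induced action of `G/N` is free:
        (∀ g : G, ∀ x ∈ {x : ℝ | ∀ g ∈ N, ρ g x = x}, ρ g x = x → g ∈ N)) := by
  obtain ⟨hmono, -, hone, hmul, hfree, hord, -⟩ := hρ
  let _ : MulAction G ℝ :=
    { smul := ρ, one_smul := congrFun hone, mul_smul := fun g h => congrFun (hmul g h) }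
  have : CovariantClass G ℝ HSMul.hSMul LE.le := ⟨fun g _ _ h => (hmono g).monotone h⟩
  have hconr : IsConradianOrbit G (0 : ℝ) := hc.isConradianOrbit hord
  let N : Subgroup G :=
    { carrier := {g | ∃ x : ℝ, g • x = x}
      one_mem' := ⟨0, one_smul G 0⟩
      mul_mem' := exists_mul_smul_eq hconr (not_bddAbove_orbit hfree 0)
      inv_mem' := fun ⟨x, hx⟩ => ⟨x, inv_smul_eq_iff.2 hx.symm⟩ }
  have hN : ∀ g, g ∈ N ↔ ∃ x : ℝ, g • x = x := fun _ => Iff.rfl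
  have hnormal : N.Normal := normal_of_mem_iff_exists_smul_eq hN
  refine ⟨N, hnormal, rfl, fun hg₀ => ?_⟩
  obtain ⟨ξ, hξ⟩ := exists_forall_mem_smul_eq hN hg₀
  have : (stabilizer G ξ).Normal := by
    rwa [show stabilizer G ξ = N from Subgroup.ext fun g => ⟨fun h => ⟨ξ, h⟩, hξ g⟩]
  have hpos : ∀ g : G, ξ < g • ξ → ∀ x : ℝ, x < g • x := fun g hg =>
    forall_lt_smul_of_lt_smul (fun x hx => hg.ne' (hξ g ⟨x, hx⟩)) hg
  obtain ⟨g₀, hg₀⟩ := hg₀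
  exact ⟨⟨g₀, fun ⟨x, hx⟩ => hg₀ x hx⟩, fun a b => ⟨ξ, commutator_mem_stabilizer hpos a b⟩,
    fun g n hn hgn => ⟨ξ, mem_stabilizer_of_pow_mem hpos hn.ne' (hξ _ hgn)⟩, ⟨ξ, hξ⟩,
    fun g x hx => hnormal.smul_smul_eq hx g, fun g x _ hgx => ⟨x, hgx⟩⟩

/-- Let `⪯` be a Conradian left-ordering of a countable group
`G` with dynamical realization `ρ`, and let `N` be the set of elements having a
fixed point.  Then `N` is a normal subgroup; moreover, if some `g ∈ G` has no
fixed point, then `G/N` is a nontrivial torsion-free abelian group acting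
freely on the nonempty set of global fixed points of `N`. -/
theorem conradian_fixed_point_subgroup
    {G : Type*} [Group G] [Countable G]
    (o : LeftOrder G) (hc : o.IsConradian)
    (ρ : G → ℝ → ℝ) (hρ : IsDynRealization o ρ) :
    ∃ N : Subgroup G, N.Normal ∧ (N : Set G) = {g : G | ∃ x : ℝ, ρ g x = x} ∧
      ((∃ g : G, ∀ x : ℝ, ρ g x ≠ x) →
        -- `G/N` is nontrivial:
        (∃ g : G, g ∉ N) ∧
        -- `G/N` is abelian:
        (∀ g h : G, g * h * g⁻¹ * h⁻¹ ∈ N) ∧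
        -- `G/N` is torsion-free:
        (∀ (g : G) (n : ℕ), 0 < n → g ^ n ∈ N → g ∈ N) ∧
        -- the set of global fixed points of `N` is nonempty:
        {x : ℝ | ∀ g ∈ N, ρ g x = x}.Nonempty ∧
        -- `G` (hence `G/N`) acts on this set:
        (∀ g : G, ∀ x ∈ {x : ℝ | ∀ g ∈ N, ρ g x = x},
          ρ g x ∈ {x : ℝ | ∀ g ∈ N, ρ g x = x}) ∧
        -- and the induced action of `G/N` is free:
        (∀ g : G, ∀ x ∈ {x : ℝ | ∀ g ∈ N, ρ g x = x}, ρ g x = x → g ∈ N)) :=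
  conradian_fixed_point_subgroup_general o hc ρ hρ
end

section
/- Let (Γ,⪯) be a countable left-ordered group, fix a dynamical realization of (Γ,⪯), let T be a nontrivial ⪯-convex subgroup of Γ, and let I_T be the minimal open interval containing 0 that is invariant under T (equivalently, the open convex hull of the orbit T·0). Then every element of Γ either maps I_T onto itself or maps I_T to an interval disjoint from I_T; in particular, the setwise stabilizer of I_T in Γ is exactly T. -/
/-! The hull `I_T` of the orbit `T·0` is `T`-invariant because `T` is a group acting by increasing
maps. Conversely, if `ρ f` sends a point of `I_T` into `I_T`, squeeze it between orbit points
`t₁·0 < x < t₂·0` and `t₃·0 < f(x) < t₄·0`: then `f t₁ ≺ t₄` and `t₃ ≺ f t₂`, and comparing `t₃` with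
`f t₁` puts either `f t₁` or `f⁻¹ t₃` in an order interval with ends in `T`, so `f ∈ T` by convexity.
Since `0 ∈ I_T`, this makes `ρ f '' I_T` either `I_T` or disjoint from it. -/

namespace LeftOrder

variable {G : Type*} [Group G] (o : LeftOrder G)

theorem exists_mem_lt_one_lt {T : Subgroup G} (hT : T ≠ ⊥) :
    ∃ t₁ ∈ T, ∃ t₂ ∈ T, o.lt t₁ 1 ∧ o.lt 1 t₂ := by
  obtain ⟨t, htT, ht⟩ := T.bot_or_exists_ne_one.resolve_left hT
  rcases o.total t 1 with hlt | heq | hgt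
  · exact ⟨t, htT, t⁻¹, T.inv_mem htT, hlt, by simpa using o.mul_left _ _ t⁻¹ hlt⟩
  · exact absurd heq ht
  · exact ⟨t⁻¹, T.inv_mem htT, t, htT, by simpa using o.mul_left _ _ t⁻¹ hgt, hgt⟩

variable {o}

theorem IsConvex.mem_of_lt_of_lt {T : Subgroup G} (hT : o.IsConvex T) {f t₁ t₂ t₃ t₄ : G}
    (h₁ : t₁ ∈ T) (h₂ : t₂ ∈ T) (h₃ : t₃ ∈ T) (h₄ : t₄ ∈ T)
    (hlo : o.lt (f * t₁) t₄) (hhi : o.lt t₃ (f * t₂)) : f ∈ T := by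
  rcases o.total (f * t₁) t₃ with hlt | heq | hgt
  · have hmid : f⁻¹ * t₃ ∈ T := by
      refine hT _ t₁ t₂ h₁ h₂ (Or.inl ?_) (Or.inl ?_)
      · simpa only [inv_mul_cancel_left] using o.mul_left _ _ f⁻¹ hlt
      · simpa only [inv_mul_cancel_left] using o.mul_left _ _ f⁻¹ hhi
    simpa using T.inv_mem (T.mul_mem hmid (T.inv_mem h₃))
  · simpa using T.mul_mem (heq ▸ h₃ : f * t₁ ∈ T) (T.inv_mem h₁)
  · simpa using T.mul_mem (hT _ t₃ t₄ h₃ h₄ (Or.inl hgt) (Or.inl hlo)) (T.inv_mem h₁)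

end LeftOrder

/-- The interval `I_T`: the open convex hull of the orbit `T·0`. -/
def orbitHull {G : Type*} [Group G] (ρ : G → ℝ → ℝ) (T : Subgroup G) : Set ℝ :=
  {x : ℝ | ∃ t₁ ∈ T, ∃ t₂ ∈ T, ρ t₁ 0 < x ∧ x < ρ t₂ 0}

namespace IsDynRealization

variable {G : Type*} [Group G] {o : LeftOrder G} {ρ : G → ℝ → ℝ} (hρ : IsDynRealization o ρ)
  {T : Subgroup G}
include hρ

theorem apply_mul (g h : G) (x : ℝ) : ρ (g * h) x = ρ g (ρ h x) :=
  congrFun (hρ.2.2.2.1 g h) x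

theorem apply_one (x : ℝ) : ρ 1 x = x :=
  congrFun hρ.2.2.1 x

theorem lt_iff (f g : G) : o.lt f g ↔ ρ f 0 < ρ g 0 :=
  hρ.2.2.2.2.2.1 f g

theorem zero_mem_orbitHull (hT : T ≠ ⊥) : (0 : ℝ) ∈ orbitHull ρ T := by
  obtain ⟨t₁, h₁, t₂, h₂, hlt₁, hlt₂⟩ := o.exists_mem_lt_one_lt hT
  rw [hρ.lt_iff, hρ.apply_one] at hlt₁ hlt₂
  exact ⟨t₁, h₁, t₂, h₂, hlt₁, hlt₂⟩

theorem image_orbitHull_subset {t : G} (ht : t ∈ T) : ρ t '' orbitHull ρ T ⊆ orbitHull ρ T := by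
  rintro _ ⟨x, ⟨t₁, h₁, t₂, h₂, hlo, hhi⟩, rfl⟩
  refine ⟨t * t₁, T.mul_mem ht h₁, t * t₂, T.mul_mem ht h₂, ?_, ?_⟩ <;>
    rw [hρ.apply_mul] <;> exact hρ.1 t ‹_›

theorem image_orbitHull {t : G} (ht : t ∈ T) : ρ t '' orbitHull ρ T = orbitHull ρ T := by
  refine (hρ.image_orbitHull_subset ht).antisymm ?_
  calc orbitHull ρ T = ρ t '' (ρ t⁻¹ '' orbitHull ρ T) := by
        simp only [Set.image_image, ← hρ.apply_mul, mul_inv_cancel, hρ.apply_one, Set.image_id']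
    _ ⊆ ρ t '' orbitHull ρ T := Set.image_mono (hρ.image_orbitHull_subset (T.inv_mem ht))

theorem mem_of_apply_mem_orbitHull (hT : o.IsConvex T) {f : G} {x : ℝ}
    (hx : x ∈ orbitHull ρ T) (hfx : ρ f x ∈ orbitHull ρ T) : f ∈ T := by
  obtain ⟨t₁, h₁, t₂, h₂, hlo, hhi⟩ := hx
  obtain ⟨t₃, h₃, t₄, h₄, hlo', hhi'⟩ := hfx
  refine hT.mem_of_lt_of_lt h₁ h₂ h₃ h₄ ?_ ?_ <;> rw [hρ.lt_iff, hρ.apply_mul]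
  · exact (hρ.1 f hlo).trans hhi'
  · exact hlo'.trans (hρ.1 f hhi)

end IsDynRealization

theorem stabilizer_of_convex_interval_general
    {Γ : Type*} [Group Γ]
    (o : LeftOrder Γ) (ρ : Γ → ℝ → ℝ) (hρ : IsDynRealization o ρ)
    (T : Subgroup Γ) (hTnt : T ≠ ⊥) (hconv : o.IsConvex T)
    (I : Set ℝ)
    (hI : I = {x : ℝ | ∃ t₁ ∈ T, ∃ t₂ ∈ T, ρ t₁ 0 < x ∧ x < ρ t₂ 0}) :
    (∀ f : Γ, ρ f '' I = I ∨ Disjoint (ρ f '' I) I) ∧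
    (∀ f : Γ, ρ f '' I = I ↔ f ∈ T) := by
  obtain rfl : I = orbitHull ρ T := hI
  have hmem {f : Γ} {x : ℝ} := hρ.mem_of_apply_mem_orbitHull hconv (f := f) (x := x)
  refine ⟨fun f => ?_, fun f => ⟨fun hf => ?_, hρ.image_orbitHull⟩⟩
  · by_cases hf : f ∈ T
    · exact Or.inl (hρ.image_orbitHull hf)
    · exact Or.inr (Set.disjoint_left.2 fun _ ⟨x, hx, hfx⟩ hy => hf (hmem hx (hfx ▸ hy)))
  · have h0 := hρ.zero_mem_orbitHull hTnt
    obtain ⟨x, hx, hfx⟩ : (0 : ℝ) ∈ ρ f '' orbitHull ρ T := hf.symm ▸ h0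
    exact hmem hx (hfx ▸ h0)

/-- Let `(Γ, ⪯)` be a countable left-ordered group with
dynamical realization `ρ`, let `T` be a nontrivial `⪯`-convex subgroup and let
`I_T` be the minimal open interval containing `0` invariant under `T`, i.e. the
open convex hull of the orbit `T·0`.  Then every element of `Γ` either maps
`I_T` onto itself or maps it to a disjoint interval; in particular the setwise
stabilizer of `I_T` is exactly `T`. -/
theorem stabilizer_of_convex_interval
    {Γ : Type*} [Group Γ] [Countable Γ]
    (o : LeftOrder Γ) (ρ : Γ → ℝ → ℝ) (hρ : IsDynRealization o ρ)
    (T : Subgroup Γ) (hTnt : T ≠ ⊥) (hconv : o.IsConvex T)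
    (I : Set ℝ)
    (hI : I = {x : ℝ | ∃ t₁ ∈ T, ∃ t₂ ∈ T, ρ t₁ 0 < x ∧ x < ρ t₂ 0}) :
    (∀ f : Γ, ρ f '' I = I ∨ Disjoint (ρ f '' I) I) ∧
    (∀ f : Γ, ρ f '' I = I ↔ f ∈ T) :=
  stabilizer_of_convex_interval_general o ρ hρ T hTnt hconv I hI
end
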